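/- arXiv:1409.1499 — 6 statements merged into one kernel-verified Lean document; each statement's English description precedes it below -/
import Mathlib

section
/- For every r ∈ [0, E[D]] and every integer L ≥ 1, the expected value E[I^r_L] equals the partial Spitzer sum: E[max_{0 ≤ j ≤ L} (j r − Σ_{i=1}^j D_i)] = Σ_{n=1}^L (1/n) E[(n r − Σ_{i=1}^n D_i)^+]. -/
/-!
Write `M_n(x) = max_{0 ≤ j ≤ n} ∑_{i < j} x_i`. Spitzer's combinatorial lemma: summing the
increment `M_{n+1} − M_n` over the `n + 1` cyclic rotations of `(x_0, …, x_n)` gives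
`(x_0 + ⋯ + x_n)⁺`. The partial sums of the rotations are differences of
`U_t = ∑_{i < t} x_{i mod (n+1)}`, which satisfies `U_{t+n+1} = U_t + s` with `s = x_0 + ⋯ + x_n`; when `s ≥ 0` the
summands telescope in the window maxima of `U`, and when `s < 0` they all vanish.
For an i.i.d. sequence all rotations of `(X_0, …, X_n)` have the same law, so taking
expectations gives `E[M_{n+1}] − E[M_n] = E[(S_{n+1})⁺] / (n + 1)`; summing over `n` gives the
identity, applied to `X_i = r − D_i`.
-/

open MeasureTheory ProbabilityTheory Finset

section SupRange

variable {α : Type*} [LinearOrder α]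

lemma sup'_range_add_two (f : ℕ → α) (n : ℕ) :
    (range (n + 2)).sup' nonempty_range_add_one f
      = max ((range (n + 1)).sup' nonempty_range_add_one f) (f (n + 1)) := by
  apply le_antisymm
  · refine sup'_le _ _ fun j hj => ?_
    rcases (mem_range_succ_iff.1 hj).lt_or_eq with hj | rfl
    · exact le_max_of_le_left (le_sup' f (mem_range.2 hj))
    · exact le_max_right _ _
  · exact max_le (sup'_le _ _ fun j hj => le_sup' f (by simp at hj ⊢; omega))
      (le_sup' f (by simp))

lemma sup'_range_add_two' (f : ℕ → α) (n : ℕ) :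
    (range (n + 2)).sup' nonempty_range_add_one f
      = max (f 0) ((range (n + 1)).sup' nonempty_range_add_one fun j => f (j + 1)) := by
  apply le_antisymm
  · refine sup'_le _ _ fun j hj => ?_
    rcases j with _ | j
    · exact le_max_left _ _
    · exact le_max_of_le_right (le_sup' (fun j => f (j + 1)) (by simp at hj ⊢; omega))
  · exact max_le (le_sup' f (by simp))
      (sup'_le _ _ fun j hj => le_sup' f (by simp at hj ⊢; omega))

end SupRange

lemma sum_max_sub_sup'_of_add_period (U : ℕ → ℝ) (n : ℕ) (s : ℝ)
    (hU : ∀ k, U (k + (n + 1)) = U k + s) :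
    ∑ k ∈ range (n + 1),
        max (U (k + (n + 1)) - (range (n + 1)).sup' nonempty_range_add_one fun j => U (k + j)) 0
      = max s 0 := by
  set V : ℕ → ℝ := fun k => (range (n + 1)).sup' nonempty_range_add_one fun j => U (k + j)
  have hUV : ∀ k, U k ≤ V k := fun k =>
    show U (k + 0) ≤ V k from le_sup' (fun j => U (k + j)) (mem_range.2 n.succ_pos)
  rcases le_or_gt 0 s with hs | hs
  · have hterm : ∀ k, max (U (k + (n + 1)) - V k) 0 = V (k + 1) - V k := by
      intro k
      have hUV' : U (k + (n + 1)) ≤ V (k + 1) :=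
        le_sup' (fun j => U (k + 1 + j)) (mem_range.2 n.lt_succ_self) |>.trans_eq' (by ring_nf)
      calc max (U (k + (n + 1)) - V k) 0 = max (V k) (U (k + (n + 1))) - V k := by
            rw [← max_sub_sub_right, sub_self, max_comm]
        _ = max (U k) (V (k + 1)) - V k := by
            simp only [V, ← sup'_range_add_two, sup'_range_add_two', add_zero, add_assoc, add_comm 1]
        _ = V (k + 1) - V k := by rw [max_eq_right (by linarith [hU k])]
    have hV : V (n + 1) = V 0 + s := by
      simp only [V, sup'_add]
      exact sup'_congr _ rfl fun j _ => by rw [zero_add, add_comm, hU]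
    rw [sum_congr rfl fun k _ => hterm k, sum_range_sub, hV, max_eq_left hs]
    ring
  · rw [max_eq_right hs.le]
    exact sum_eq_zero fun k _ => max_eq_right (by linarith [hU k, hUV k])

def maxPartialSum (n : ℕ) (x : ℕ → ℝ) : ℝ :=
  (range (n + 1)).sup' nonempty_range_add_one fun j => ∑ i ∈ range j, x i

lemma maxPartialSum_zero (x : ℕ → ℝ) : maxPartialSum 0 x = 0 := by
  simp [maxPartialSum]

lemma maxPartialSum_succ (n : ℕ) (x : ℕ → ℝ) :
    maxPartialSum (n + 1) x = max (maxPartialSum n x) (∑ i ∈ range (n + 1), x i) :=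
  sup'_range_add_two _ n

lemma maxPartialSum_succ_sub (n : ℕ) (x : ℕ → ℝ) :
    maxPartialSum (n + 1) x - maxPartialSum n x
      = max (∑ i ∈ range (n + 1), x i - maxPartialSum n x) 0 := by
  rw [maxPartialSum_succ, ← max_sub_sub_right, sub_self, max_comm]

lemma maxPartialSum_congr {n : ℕ} {x y : ℕ → ℝ} (h : ∀ i < n, x i = y i) :
    maxPartialSum n x = maxPartialSum n y :=
  sup'_congr _ rfl fun j hj => sum_congr rfl fun i hi =>
    h i (by simp only [mem_range] at hi hj; omega)

lemma measurable_maxPartialSum (n : ℕ) : Measurable (maxPartialSum n) :=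
  measurable_range_sup'' fun _ _ => measurable_sum _ fun i _ => measurable_pi_apply i

def cyclicShift {α : Type*} (m k : ℕ) (x : ℕ → α) : ℕ → α := fun i => x ((k + i) % m)

lemma sum_maxPartialSum_cyclicShift_sub (n : ℕ) (x : ℕ → ℝ) :
    ∑ k ∈ range (n + 1), (maxPartialSum (n + 1) (cyclicShift (n + 1) k x)
        - maxPartialSum n (cyclicShift (n + 1) k x))
      = max (∑ i ∈ range (n + 1), x i) 0 := by
  set U : ℕ → ℝ := fun t => ∑ i ∈ range t, x (i % (n + 1))
  have hshift : ∀ k j, ∑ i ∈ range j, cyclicShift (n + 1) k x i = U (k + j) - U k := by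
    intro k j
    simp only [U, sum_range_add, cyclicShift, add_sub_cancel_left]
  have hperiod : ∀ k, U (k + (n + 1)) = U k + U (n + 1) := by
    intro k
    induction k with
    | zero => simp [U]
    | succ k ih =>
      have hstep : ∀ t, U (t + 1) = U t + x (t % (n + 1)) := fun t => sum_range_succ _ t
      rw [add_right_comm, hstep, ih, Nat.add_mod_right, hstep k]
      ring
  have hUn : U (n + 1) = ∑ i ∈ range (n + 1), x i :=
    sum_congr rfl fun i hi => by rw [Nat.mod_eq_of_lt (mem_range.1 hi)]
  rw [← hUn, ← sum_max_sub_sup'_of_add_period U n _ hperiod]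
  refine sum_congr rfl fun k _ => ?_
  have hmax : maxPartialSum n (cyclicShift (n + 1) k x)
      = ((range (n + 1)).sup' nonempty_range_add_one fun j => U (k + j)) - U k := by
    rw [sub_eq_add_neg, sup'_add]
    exact sup'_congr _ rfl fun j _ => by rw [hshift k j, sub_eq_add_neg]
  rw [maxPartialSum_succ_sub, hmax, hshift]
  ring_nf

section Exchangeability

variable {Ω : Type*} [MeasurableSpace Ω] {μ : Measure Ω}

lemma identDistrib_comp_of_injective {κ ι β : Type*} [Fintype ι] [MeasurableSpace β]
    {X : κ → Ω → β} (hindep : iIndepFun X μ) (hident : ∀ i j, IdentDistrib (X i) (X j) μ μ)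
    {σ τ : ι → κ} (hσ : σ.Injective) (hτ : τ.Injective) :
    IdentDistrib (fun ω i => X (σ i) ω) (fun ω i => X (τ i) ω) μ μ where
  aemeasurable_fst := aemeasurable_pi_lambda _ fun i => (hident (σ i) (σ i)).aemeasurable_fst
  aemeasurable_snd := aemeasurable_pi_lambda _ fun i => (hident (τ i) (τ i)).aemeasurable_fst
  map_eq := by
    rw [(hindep.precomp hσ).map_fun_eq_pi_map fun i => (hident (σ i) (σ i)).aemeasurable_fst,
      (hindep.precomp hτ).map_fun_eq_pi_map fun i => (hident (τ i) (τ i)).aemeasurable_fst]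
    exact congrArg Measure.pi (funext fun i => (hident (σ i) (τ i)).map_eq)

lemma injective_add_mod (m k : ℕ) : Function.Injective fun j : Fin m => (k + j) % m :=
  fun i j h => Fin.ext <| by
    simpa [Nat.ModEq, Nat.mod_eq_of_lt i.isLt, Nat.mod_eq_of_lt j.isLt] using
      Nat.ModEq.add_left_cancel' k h

lemma identDistrib_cyclicShift {β : Type*} [MeasurableSpace β] {X : ℕ → Ω → β}
    (hindep : iIndepFun X μ) (hident : ∀ i j, IdentDistrib (X i) (X j) μ μ) (n k : ℕ) :
    IdentDistrib (fun ω => cyclicShift (n + 1) k (X · ω))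
      (fun ω => cyclicShift (n + 1) 0 (X · ω)) μ μ := by
  let extend : (Fin (n + 1) → β) → ℕ → β := fun y i => y ⟨i % (n + 1), Nat.mod_lt _ n.succ_pos⟩
  have hextend : Measurable extend := measurable_pi_lambda _ fun i => measurable_pi_apply _
  have hshift : ∀ k, (fun ω => cyclicShift (n + 1) k (X · ω))
      = extend ∘ fun ω (j : Fin (n + 1)) => X ((k + j) % (n + 1)) ω := by
    intro k
    funext ω i
    simp [extend, cyclicShift]
  rw [hshift, hshift]
  exact (identDistrib_comp_of_injective hindep hident (injective_add_mod _ k)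
    (injective_add_mod _ 0)).comp hextend

end Exchangeability

section SpitzerIdentity

variable {Ω : Type*} [MeasurableSpace Ω] {μ : Measure Ω} {X : ℕ → Ω → ℝ}

lemma integrable_maxPartialSum (hint : ∀ i, Integrable (X i) μ) (n : ℕ) :
    Integrable (fun ω => maxPartialSum n (X · ω)) μ := by
  induction n with
  | zero => simp [maxPartialSum_zero]
  | succ n ih =>
    simp only [maxPartialSum_succ]
    exact ih.sup (integrable_finsetSum _ fun i _ => hint i)

lemma integral_maxPartialSum_succ (hindep : iIndepFun X μ)
    (hident : ∀ i j, IdentDistrib (X i) (X j) μ μ) (hint : ∀ i, Integrable (X i) μ) (n : ℕ) :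
    ∫ ω, maxPartialSum (n + 1) (X · ω) ∂μ
      = ∫ ω, maxPartialSum n (X · ω) ∂μ
        + ((n : ℝ) + 1)⁻¹ * ∫ ω, max (∑ i ∈ range (n + 1), X i ω) 0 ∂μ := by
  let Δ : (ℕ → ℝ) → ℝ := fun x => maxPartialSum (n + 1) x - maxPartialSum n x
  have hΔ_int : ∀ k, Integrable (fun ω => Δ (cyclicShift (n + 1) k (X · ω))) μ := fun k =>
    (integrable_maxPartialSum (fun i => hint _) _).sub (integrable_maxPartialSum (fun i => hint _) _)
  have hΔ_zero : ∀ x, Δ (cyclicShift (n + 1) 0 x) = Δ x := fun x => by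
    have h : ∀ i < n + 1, cyclicShift (n + 1) 0 x i = x i := fun i hi => by
      simp [cyclicShift, Nat.mod_eq_of_lt hi]
    simp only [Δ]
    rw [maxPartialSum_congr h, maxPartialSum_congr (n := n) fun i hi => h i (by omega)]
  have hΔ_shift : ∀ k, ∫ ω, Δ (cyclicShift (n + 1) k (X · ω)) ∂μ = ∫ ω, Δ (X · ω) ∂μ := by
    intro k
    calc _ = ∫ ω, Δ (cyclicShift (n + 1) 0 (X · ω)) ∂μ :=
          ((identDistrib_cyclicShift hindep hident n k).comp
            ((measurable_maxPartialSum _).sub (measurable_maxPartialSum _))).integral_eq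
      _ = _ := by simp only [hΔ_zero]
  have hΔ : ((n : ℝ) + 1) * ∫ ω, Δ (X · ω) ∂μ = ∫ ω, max (∑ i ∈ range (n + 1), X i ω) 0 ∂μ := by
    calc ((n : ℝ) + 1) * ∫ ω, Δ (X · ω) ∂μ
        = ∑ k ∈ range (n + 1), ∫ ω, Δ (cyclicShift (n + 1) k (X · ω)) ∂μ := by
          simp [hΔ_shift]
      _ = ∫ ω, ∑ k ∈ range (n + 1), Δ (cyclicShift (n + 1) k (X · ω)) ∂μ :=
          (integral_finsetSum _ fun k _ => hΔ_int k).symm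
      _ = ∫ ω, max (∑ i ∈ range (n + 1), X i ω) 0 ∂μ := by
          simp only [Δ, sum_maxPartialSum_cyclicShift_sub]
  rw [← hΔ, ← mul_assoc, inv_mul_cancel₀ (by positivity), one_mul]
  simp only [Δ]
  rw [integral_sub (integrable_maxPartialSum hint _) (integrable_maxPartialSum hint _)]
  ring

lemma integral_maxPartialSum (hindep : iIndepFun X μ)
    (hident : ∀ i j, IdentDistrib (X i) (X j) μ μ) (hint : ∀ i, Integrable (X i) μ) (L : ℕ) :
    ∫ ω, maxPartialSum L (X · ω) ∂μ
      = ∑ n ∈ Icc 1 L, (n : ℝ)⁻¹ * ∫ ω, max (∑ i ∈ range n, X i ω) 0 ∂μ := by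
  induction L with
  | zero => simp [maxPartialSum_zero]
  | succ L ih =>
    rw [integral_maxPartialSum_succ hindep hident hint, ih, sum_Icc_succ_top (by omega)]
    push_cast
    rfl

end SpitzerIdentity

/-- **Partial Spitzer identity (Kingman).** For i.i.d. nonnegative demands `D` with
finite positive mean and positive variance, for every `r ∈ [0, E[D]]` and every `L ≥ 1`,
`E[max_{0 ≤ j ≤ L} (j r − Σ_{i=1}^j D_i)] = Σ_{n=1}^L (1/n) E[(n r − Σ_{i=1}^n D_i)⁺]`. -/
theorem stmt0
    {Ω : Type*} [MeasurableSpace Ω] (μ : Measure Ω) [IsProbabilityMeasure μ]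
    (D : ℕ → Ω → ℝ)
    (hindep : iIndepFun D μ)
    (hident : ∀ i, IdentDistrib (D i) (D 0) μ μ)
    (hint : Integrable (D 0) μ)
    (r : ℝ)
    (L : ℕ) :
    ∫ ω, (Finset.range (L + 1)).sup' (by simp)
        (fun j => j * r - ∑ i ∈ Finset.range j, D i ω) ∂μ
      = ∑ n ∈ Finset.Icc 1 L,
          (n : ℝ)⁻¹ * ∫ ω, max (n * r - ∑ i ∈ Finset.range n, D i ω) 0 ∂μ := by
  have hsub : Measurable fun t : ℝ => r - t := measurable_const.sub measurable_id
  have hX := integral_maxPartialSum (X := fun i ω => r - D i ω)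
    (hindep.comp (fun _ t => r - t) fun _ => hsub)
    (fun i j => ((hident i).trans (hident j).symm).comp hsub)
    (fun i => (integrable_const r).sub ((hident i).integrable_iff.2 hint)) L
  simp only [maxPartialSum, sum_sub_distrib, sum_const, card_range, nsmul_eq_mul] at hX
  exact hX
end

section
/- For every r ∈ [0, E[D]), the random variable I^r_∞ := sup_{j ≥ 0} (j r − Σ_{i=1}^j D_i) has finite expectation, and E[I^r_∞] = Σ_{n=1}^∞ (1/n) E[(n r − Σ_{i=1}^n D_i)^+], with the series converging. -/
/-!
Put `Xᵢ = r - Dᵢ`, `Sⱼ = X₀ + ⋯ + X_{j-1}` and `Mₙ = max (0, S₁, …, Sₙ)`. Since `E X < 0`, the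
strong law makes `Sⱼ → -∞` a.s., so `I^r_∞ = sup_j Sⱼ` is the a.s. finite increasing limit of `Mₙ`.

Spitzer: `M_{n+1} - Mₙ` is a function of `(X₀, …, Xₙ)` whose values at the `n + 1` cyclic rotations
of this vector add up to `S_{n+1}⁺` (the cycle lemma). The rotated vectors all have the law of
`(X₀, …, Xₙ)`, hence `E M_{n+1} - E Mₙ = E S_{n+1}⁺ / (n + 1)`.

Kingman: Lindley's recursion `M_{n+1} = (X₀ + M'ₙ)⁺`, with `M'ₙ` a copy of `Mₙ` built from
`X₁, X₂, …` and independent of `X₀`, gives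
`E Mₙ² ≤ E M_{n+1}² ≤ E X² + 2 E X · E Mₙ + E Mₙ²`, i.e. `E Mₙ ≤ E X² / (2 |E X|)`.
By Fatou and monotone convergence, `I^r_∞` is integrable and `E Mₙ → E I^r_∞`.
-/

open MeasureTheory ProbabilityTheory Finset Filter Topology

namespace RandomWalk

def runningMax (x : ℕ → ℝ) : ℕ → ℝ
  | 0 => 0
  | n + 1 => max (runningMax x n) (∑ i ∈ range (n + 1), x i)

section Deterministic

variable (x : ℕ → ℝ)

@[simp] lemma runningMax_zero : runningMax x 0 = 0 := rfl

lemma runningMax_succ (n : ℕ) :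
    runningMax x (n + 1) = max (runningMax x n) (∑ i ∈ range (n + 1), x i) := rfl

lemma runningMax_nonneg (n : ℕ) : 0 ≤ runningMax x n := by
  induction n with
  | zero => rfl
  | succ n ih => exact ih.trans (le_max_left _ _)

lemma monotone_runningMax : Monotone (runningMax x) :=
  monotone_nat_of_le_succ fun _ => le_max_left _ _

lemma sum_range_le_runningMax {j n : ℕ} (h : j ≤ n) : ∑ i ∈ range j, x i ≤ runningMax x n := by
  cases j with
  | zero => simpa using runningMax_nonneg x n
  | succ j => exact (le_max_right _ _).trans (monotone_runningMax x h)

lemma runningMax_le_sum_abs (n : ℕ) : runningMax x n ≤ ∑ i ∈ range n, |x i| := by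
  induction n with
  | zero => rfl
  | succ n ih =>
    have h_abs : ∑ i ∈ range n, |x i| ≤ ∑ i ∈ range (n + 1), |x i| :=
      sum_le_sum_of_subset_of_nonneg (range_subset_range.2 n.le_succ) fun _ _ _ => abs_nonneg _
    exact max_le (ih.trans h_abs) (sum_le_sum fun i _ => le_abs_self (x i))

variable {x} in
lemma runningMax_congr {y : ℕ → ℝ} {n : ℕ} (h : ∀ i < n, x i = y i) :
    runningMax x n = runningMax y n := by
  induction n with
  | zero => rfl
  | succ n ih =>
    rw [runningMax_succ, runningMax_succ, ih fun i hi => h i (by omega),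
      sum_congr rfl fun i hi => h i (mem_range.1 hi)]

/-- Lindley's recursion. -/
lemma runningMax_succ_eq_max_zero_add (n : ℕ) :
    runningMax x (n + 1) = max 0 (x 0 + runningMax (fun i => x (i + 1)) n) := by
  induction n with
  | zero => simp [runningMax_succ, max_comm]
  | succ n ih =>
    rw [runningMax_succ, ih, sum_range_succ', runningMax_succ, max_assoc, ← max_add_add_left,
      add_comm (x 0) (∑ _ ∈ _, _)]

variable {x}

lemma runningMax_le_ciSup (hx : BddAbove (Set.range fun j => ∑ i ∈ range j, x i)) (n : ℕ) :
    runningMax x n ≤ ⨆ j, ∑ i ∈ range j, x i := by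
  induction n with
  | zero => simpa using le_ciSup hx 0
  | succ n ih => exact max_le ih (le_ciSup hx (n + 1))

lemma tendsto_runningMax (hx : BddAbove (Set.range fun j => ∑ i ∈ range j, x i)) :
    Tendsto (runningMax x) atTop (𝓝 (⨆ j, ∑ i ∈ range j, x i)) := by
  have hbdd : BddAbove (Set.range (runningMax x)) :=
    ⟨_, Set.forall_mem_range.2 (runningMax_le_ciSup hx)⟩
  have hsup : ⨆ n, runningMax x n = ⨆ j, ∑ i ∈ range j, x i :=
    le_antisymm (ciSup_le (runningMax_le_ciSup hx))
      (ciSup_mono hbdd fun j => sum_range_le_runningMax x le_rfl)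
  exact hsup ▸ tendsto_atTop_ciSup (monotone_runningMax x) hbdd

lemma _root_.Function.Periodic.sum_range_add {M : Type*} [AddCancelCommMonoid M] {y : ℕ → M}
    {n : ℕ} (hy : Function.Periodic y n) (k : ℕ) :
    ∑ i ∈ range n, y (k + i) = ∑ i ∈ range n, y i := by
  induction k with
  | zero => simp
  | succ k ih =>
    have h := sum_range_succ' (fun i => y (k + i)) n
    rw [sum_range_succ, add_zero, hy k] at h
    simp_rw [add_right_comm k 1, add_assoc k, ← add_right_cancel h, ih]

/-- The cycle lemma. -/
theorem sum_runningMax_succ_sub_of_periodic {y : ℕ → ℝ} {n : ℕ}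
    (hy : Function.Periodic y (n + 1)) :
    ∑ k ∈ range (n + 1),
        (runningMax (fun i => y (k + i)) (n + 1) - runningMax (fun i => y (k + i)) n)
      = max (∑ i ∈ range (n + 1), y i) 0 := by
  set S := ∑ i ∈ range (n + 1), y i
  set R : ℕ → ℝ := fun k => runningMax (fun i => y (k + i)) n
  rcases le_or_gt 0 S with hS | hS
  -- For `S ≥ 0` the positive part in Lindley's recursion is inactive, and the sum telescopes.
  · have hstep : ∀ k, runningMax (fun i => y (k + i)) (n + 1) = y k + R (k + 1) := by
      intro k
      have hshift : (fun i => y (k + (i + 1))) = fun i => y (k + 1 + i) := by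
        funext i; rw [add_comm i 1, add_assoc]
      have hsplit := sum_range_succ' (fun i => y (k + i)) n
      have hle := sum_range_le_runningMax (fun i => y (k + (i + 1))) (le_refl n)
      rw [hy.sum_range_add] at hsplit
      rw [runningMax_succ_eq_max_zero_add, max_eq_right (by linarith), add_zero, hshift]
    have hper : R (n + 1) = R 0 := by
      simp only [R, zero_add]
      exact runningMax_congr fun i _ => by rw [add_comm, hy i]
    calc _ = ∑ k ∈ range (n + 1), (y k + (R (k + 1) - R k)) :=
          sum_congr rfl fun k _ => by rw [hstep]; ring
      _ = max S 0 := by rw [sum_add_distrib, sum_range_sub, hper, sub_self, add_zero,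
          max_eq_left hS]
  · rw [max_eq_right hS.le]
    refine sum_eq_zero fun k _ => ?_
    rw [runningMax_succ, hy.sum_range_add, max_eq_left (hS.le.trans (runningMax_nonneg _ n)),
      sub_self]

lemma bddAbove_range_sum_of_tendsto_div {m : ℝ} (hm : m < 0)
    (hx : Tendsto (fun n : ℕ => (∑ i ∈ range n, x i) / n) atTop (𝓝 m)) :
    BddAbove (Set.range fun j => ∑ i ∈ range j, x i) := by
  refine (isBoundedUnder_of_eventually_le (a := 0) ?_).bddAbove_range
  filter_upwards [hx.eventually (gt_mem_nhds hm)] with n hn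
  exact (neg_of_div_neg_left hn n.cast_nonneg).le

end Deterministic

section Integration

lemma measurable_runningMax {α : Type*} [MeasurableSpace α] {u : α → ℕ → ℝ}
    (hu : ∀ i, Measurable fun a => u a i) (n : ℕ) : Measurable fun a => runningMax (u a) n := by
  induction n with
  | zero => exact measurable_const
  | succ n ih => exact ih.max (Finset.measurable_sum _ fun i _ => hu i)

lemma integrable_of_tendsto_of_integral_norm_le {α E : Type*} [MeasurableSpace α]
    [NormedAddCommGroup E] {μ : Measure α} {f : ℕ → α → E} {F : α → E} {C : ℝ}
    (hf : ∀ n, Integrable (f n) μ) (hC : ∀ n, ∫ x, ‖f n x‖ ∂μ ≤ C)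
    (h_tendsto : ∀ᵐ x ∂μ, Tendsto (fun n => f n x) atTop (𝓝 (F x))) : Integrable F μ := by
  refine ⟨aestronglyMeasurable_of_tendsto_ae _ (fun n => (hf n).1) h_tendsto, ?_⟩
  have hfatou : ∫⁻ x, ‖F x‖ₑ ∂μ ≤ liminf (fun n => ∫⁻ x, ‖f n x‖ₑ ∂μ) atTop :=
    lintegral_congr_ae (by filter_upwards [h_tendsto] with x hx using hx.enorm.liminf_eq) ▸
      lintegral_liminf_le' fun n => (hf n).1.enorm
  have hbound (n : ℕ) : ∫⁻ x, ‖f n x‖ₑ ∂μ ≤ ENNReal.ofReal C := by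
    rw [← ofReal_integral_norm_eq_lintegral_enorm (hf n)]
    exact ENNReal.ofReal_le_ofReal (hC n)
  exact hfatou.trans_lt <| (liminf_le_of_frequently_le' (Frequently.of_forall hbound)).trans_lt
    ENNReal.ofReal_lt_top

end Integration

section IID

variable {Ω : Type*} [MeasurableSpace Ω] {μ : Measure Ω}

lemma _root_.ProbabilityTheory.iIndepFun.identDistrib_comp_injective {ι β : Type*}
    [MeasurableSpace β] {X : ι → Ω → β}
    (hmeas : ∀ i, Measurable (X i)) (hindep : iIndepFun X μ)
    (hident : ∀ i j, IdentDistrib (X i) (X j) μ μ) {σ : ι → ι} (hσ : σ.Injective) :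
    IdentDistrib (fun ω i => X (σ i) ω) (fun ω i => X i ω) μ μ where
  aemeasurable_fst := (measurable_pi_lambda _ fun i => hmeas (σ i)).aemeasurable
  aemeasurable_snd := (measurable_pi_lambda _ hmeas).aemeasurable
  map_eq := by
    rw [(hindep.precomp hσ).map_fun_eq_infinitePi_map (fun i => hmeas (σ i)),
      hindep.map_fun_eq_infinitePi_map hmeas]
    congr 1
    exact funext fun i => (hident (σ i) i).map_eq

lemma _root_.ProbabilityTheory.iIndepFun.indepFun_tail {β : Type*} [MeasurableSpace β]
    {X : ℕ → Ω → β} (hmeas : ∀ i, Measurable (X i)) (hindep : iIndepFun X μ) :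
    IndepFun (X 0) (fun ω i => X (i + 1) ω) μ := by
  rw [IndepFun_iff_Indep]
  have h := indep_iSup_of_disjoint (fun i => (hmeas i).comap_le)
    hindep.iIndep (S := {0}) (T := Set.Ioi 0) (by simp)
  convert h using 1
  · simp
  · simp_rw [MeasurableSpace.pi, MeasurableSpace.comap_iSup, MeasurableSpace.comap_comp]
    refine le_antisymm (iSup_le fun i => le_iSup₂_of_le (i + 1) i.succ_pos le_rfl)
      (iSup₂_le fun i hi => ?_)
    obtain ⟨j, rfl⟩ := Nat.exists_eq_succ_of_ne_zero (Nat.pos_iff_ne_zero.1 hi)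
    exact le_iSup_of_le j le_rfl

end IID

section Walk

variable {Ω : Type*} [MeasurableSpace Ω] {μ : Measure Ω} {X : ℕ → Ω → ℝ}

lemma memLp_runningMax {p : ENNReal} (hmeas : ∀ i, Measurable (X i)) (hX : ∀ i, MemLp (X i) p μ)
    (n : ℕ) : MemLp (fun ω => runningMax (fun i => X i ω) n) p μ := by
  refine (memLp_finsetSum (f := fun i ω => |X i ω|) (range n) fun i _ => (hX i).abs).of_le
    (measurable_runningMax hmeas n).aestronglyMeasurable (ae_of_all _ fun ω => ?_)
  rw [Real.norm_of_nonneg (runningMax_nonneg _ n),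
    Real.norm_of_nonneg (sum_nonneg fun i _ => abs_nonneg (X i ω))]
  exact runningMax_le_sum_abs _ n

lemma integrable_runningMax (hmeas : ∀ i, Measurable (X i)) (hX : ∀ i, Integrable (X i) μ)
    (n : ℕ) : Integrable (fun ω => runningMax (fun i => X i ω) n) μ :=
  memLp_one_iff_integrable.1 <|
    memLp_runningMax hmeas (fun i => memLp_one_iff_integrable.2 (hX i)) n

def rotateBelow (m k i : ℕ) : ℕ := if i < m then (k + i) % m else i

lemma rotateBelow_injective (m k : ℕ) : (rotateBelow m k).Injective := by
  intro i j h
  simp only [rotateBelow] at h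
  split_ifs at h with hi hj hj
  · have h' : i % m = j % m := Nat.ModEq.add_left_cancel' k h
    rwa [Nat.mod_eq_of_lt hi, Nat.mod_eq_of_lt hj] at h'
  · exact absurd (h ▸ Nat.mod_lt _ (by omega)) hj
  · exact absurd (h.symm ▸ Nat.mod_lt _ (by omega)) hi
  · exact h

theorem natCast_mul_integral_runningMax_succ_sub (hmeas : ∀ i, Measurable (X i))
    (hindep : iIndepFun X μ) (hident : ∀ i, IdentDistrib (X i) (X 0) μ μ)
    (hint : Integrable (X 0) μ) (n : ℕ) :
    ((n + 1 : ℕ) : ℝ) * (∫ ω, runningMax (fun i => X i ω) (n + 1) ∂μ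
        - ∫ ω, runningMax (fun i => X i ω) n ∂μ)
      = ∫ ω, max (∑ i ∈ range (n + 1), X i ω) 0 ∂μ := by
  set incr : (ℕ → ℝ) → ℝ := fun y => runningMax y (n + 1) - runningMax y n
  have hI : Measurable incr :=
    (measurable_runningMax (fun i => measurable_pi_apply i) _).sub
      (measurable_runningMax (fun i => measurable_pi_apply i) _)
  have hML1 := integrable_runningMax hmeas fun i => (hident i).integrable_iff.2 hint
  have hrot (k : ℕ) :
      IdentDistrib (fun ω => incr fun i => X (rotateBelow (n + 1) k i) ω)
        (fun ω => incr fun i => X i ω) μ μ :=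
    (hindep.identDistrib_comp_injective hmeas (fun i j => (hident i).trans (hident j).symm)
      (rotateBelow_injective _ k)).comp hI
  have hcycle (ω : Ω) : ∑ k ∈ range (n + 1), incr (fun i => X (rotateBelow (n + 1) k i) ω)
      = max (∑ i ∈ range (n + 1), X i ω) 0 := by
    have hper : Function.Periodic (fun i => X (i % (n + 1)) ω) (n + 1) := fun i => by
      simp only [Nat.add_mod_right]
    have hsum : ∑ i ∈ range (n + 1), X (i % (n + 1)) ω = ∑ i ∈ range (n + 1), X i ω :=
      sum_congr rfl fun i hi => by rw [Nat.mod_eq_of_lt (mem_range.1 hi)]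
    rw [← hsum, ← sum_runningMax_succ_sub_of_periodic hper]
    refine sum_congr rfl fun k _ => ?_
    have h (i : ℕ) (hi : i < n + 1) : X (rotateBelow (n + 1) k i) ω = X ((k + i) % (n + 1)) ω := by
      rw [rotateBelow, if_pos hi]
    simp only [incr]
    rw [runningMax_congr h, runningMax_congr fun i hi => h i (by omega)]
  calc _ = ∑ k ∈ range (n + 1), ∫ ω, incr (fun i => X (rotateBelow (n + 1) k i) ω) ∂μ := by
        simp_rw [(hrot _).integral_eq, sum_const, card_range, nsmul_eq_mul]
        rw [integral_sub (hML1 _) (hML1 _)]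
    _ = _ := by
        rw [← integral_finsetSum _ fun k _ => (hrot k).integrable_iff.2 ((hML1 _).sub (hML1 _))]
        exact integral_congr_ae (ae_of_all _ hcycle)

/-- Spitzer's identity for the running maximum. -/
theorem integral_runningMax_eq_sum (hmeas : ∀ i, Measurable (X i))
    (hindep : iIndepFun X μ) (hident : ∀ i, IdentDistrib (X i) (X 0) μ μ)
    (hint : Integrable (X 0) μ) (n : ℕ) :
    ∫ ω, runningMax (fun i => X i ω) n ∂μ
      = ∑ k ∈ range n, ((k + 1 : ℕ) : ℝ)⁻¹ * ∫ ω, max (∑ i ∈ range (k + 1), X i ω) 0 ∂μ := by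
  induction n with
  | zero => simp
  | succ n ih =>
    rw [sum_range_succ, ← ih, ← natCast_mul_integral_runningMax_succ_sub hmeas hindep hident hint,
      inv_mul_cancel_left₀ (by positivity), add_sub_cancel]

variable [IsProbabilityMeasure μ]

/-- Kingman's bound. -/
theorem integral_runningMax_le (hmeas : ∀ i, Measurable (X i)) (hindep : iIndepFun X μ)
    (hident : ∀ i, IdentDistrib (X i) (X 0) μ μ) (hX : MemLp (X 0) 2 μ) (hneg : μ[X 0] < 0)
    (n : ℕ) :
    ∫ ω, runningMax (fun i => X i ω) n ∂μ ≤ (∫ ω, X 0 ω ^ 2 ∂μ) / (2 * -μ[X 0]) := by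
  set M : ℕ → Ω → ℝ := fun n ω => runningMax (fun i => X i ω) n
  set M' : Ω → ℝ := fun ω => runningMax (fun i => X (i + 1) ω) n
  have hML2 : ∀ n, MemLp (M n) 2 μ :=
    memLp_runningMax hmeas fun i => (hident i).memLp_iff.2 hX
  have hmeas_max : Measurable fun y : ℕ → ℝ => runningMax y n :=
    measurable_runningMax (fun i => measurable_pi_apply i) n
  have hshift : IdentDistrib M' (M n) μ μ :=
    (hindep.identDistrib_comp_injective hmeas (fun i j => (hident i).trans (hident j).symm)
      Nat.succ_injective).comp hmeas_max
  have hM'L2 : MemLp M' 2 μ := hshift.memLp_iff.2 (hML2 n)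
  have hindep' : IndepFun (X 0) M' μ := (hindep.indepFun_tail hmeas).comp measurable_id hmeas_max
  have hlindley : ∫ ω, M (n + 1) ω ^ 2 ∂μ ≤ ∫ ω, (X 0 ω + M' ω) ^ 2 ∂μ := by
    refine integral_mono (hML2 _).integrable_sq (hX.add hM'L2).integrable_sq fun ω => ?_
    refine sq_le_sq.2 ?_
    simp only [M, M', runningMax_succ_eq_max_zero_add]
    rw [abs_of_nonneg (le_max_left _ _)]
    exact max_le (abs_nonneg _) (le_abs_self _)
  have hmono : ∫ ω, M n ω ^ 2 ∂μ ≤ ∫ ω, M (n + 1) ω ^ 2 ∂μ :=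
    integral_mono (hML2 n).integrable_sq (hML2 _).integrable_sq fun ω =>
      pow_le_pow_left₀ (runningMax_nonneg _ n) (monotone_runningMax _ n.le_succ) 2
  have hexpand : ∫ ω, (X 0 ω + M' ω) ^ 2 ∂μ
      = ∫ ω, X 0 ω ^ 2 ∂μ + 2 * (μ[X 0] * ∫ ω, M n ω ∂μ) + ∫ ω, M n ω ^ 2 ∂μ := by
    have hprod : Integrable (fun ω => X 0 ω * M' ω) μ :=
      hindep'.integrable_mul (hX.integrable one_le_two) (hM'L2.integrable one_le_two)
    have hsq : ∫ ω, M' ω ^ 2 ∂μ = ∫ ω, M n ω ^ 2 ∂μ :=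
      (hshift.comp (measurable_id.pow_const 2)).integral_eq
    simp_rw [add_sq, mul_assoc]
    rw [integral_add (f := fun ω => X 0 ω ^ 2 + 2 * (X 0 ω * M' ω))
        (hX.integrable_sq.add (hprod.const_mul 2)) hM'L2.integrable_sq,
      integral_add hX.integrable_sq (hprod.const_mul 2), integral_const_mul,
      hindep'.integral_fun_mul_eq_mul_integral hX.aestronglyMeasurable
        hM'L2.aestronglyMeasurable, hshift.integral_eq,
      hsq]
  rw [le_div_iff₀ (by linarith)]
  nlinarith

theorem integrable_iSup_sum_and_hasSum (hmeas : ∀ i, Measurable (X i))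
    (hindep : iIndepFun X μ) (hident : ∀ i, IdentDistrib (X i) (X 0) μ μ)
    (hX : MemLp (X 0) 2 μ) (hneg : μ[X 0] < 0) :
    Integrable (fun ω => ⨆ j, ∑ i ∈ range j, X i ω) μ ∧
      HasSum (fun n => ((n + 1 : ℕ) : ℝ)⁻¹ * ∫ ω, max (∑ i ∈ range (n + 1), X i ω) 0 ∂μ)
        (∫ ω, ⨆ j, ∑ i ∈ range j, X i ω ∂μ) := by
  have hint : Integrable (X 0) μ := hX.integrable one_le_two
  have hML1 := integrable_runningMax hmeas fun i => (hident i).integrable_iff.2 hint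
  have htendsto : ∀ᵐ ω ∂μ,
      Tendsto (fun n => runningMax (fun i => X i ω) n) atTop (𝓝 (⨆ j, ∑ i ∈ range j, X i ω)) := by
    filter_upwards [strong_law_ae_real X hint (fun i j hij => hindep.indepFun hij) hident]
      with ω hω
    exact tendsto_runningMax (bddAbove_range_sum_of_tendsto_div hneg hω)
  have hsup : Integrable (fun ω => ⨆ j, ∑ i ∈ range j, X i ω) μ :=
    integrable_of_tendsto_of_integral_norm_le hML1 (fun n => by
      simp_rw [Real.norm_of_nonneg (runningMax_nonneg _ _)]
      exact integral_runningMax_le hmeas hindep hident hX hneg n) htendsto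
  refine ⟨hsup, (hasSum_iff_tendsto_nat_of_nonneg (fun n => ?_) _).2 ?_⟩
  · exact mul_nonneg (by positivity) (integral_nonneg fun ω => le_max_right _ _)
  · simp_rw [← integral_runningMax_eq_sum hmeas hindep hident hint]
    exact integral_tendsto_of_tendsto_of_monotone hML1 hsup
      (ae_of_all _ fun ω => monotone_runningMax _) htendsto

end Walk

end RandomWalk

open RandomWalk

theorem stmt1_general
    {Ω : Type*} [MeasurableSpace Ω] (μ : Measure Ω) [IsProbabilityMeasure μ]
    (D : ℕ → Ω → ℝ)
    (hmeas : ∀ i, Measurable (D i))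
    (hindep : iIndepFun D μ)
    (hident : ∀ i, IdentDistrib (D i) (D 0) μ μ)
    (hint : Integrable (D 0) μ)
    (hvar : 0 < variance (D 0) μ)
    (r : ℝ) (hr : r ∈ Set.Ico 0 (∫ ω, D 0 ω ∂μ)) :
    Integrable (fun ω => ⨆ j : ℕ, ((j : ℝ) * r - ∑ i ∈ Finset.range j, D i ω)) μ ∧
    Summable (fun n : ℕ =>
      ((n + 1 : ℕ) : ℝ)⁻¹ *
        ∫ ω, max (((n + 1 : ℕ) : ℝ) * r - ∑ i ∈ Finset.range (n + 1), D i ω) 0 ∂μ) ∧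
    ∫ ω, (⨆ j : ℕ, ((j : ℝ) * r - ∑ i ∈ Finset.range j, D i ω)) ∂μ
      = ∑' n : ℕ,
          ((n + 1 : ℕ) : ℝ)⁻¹ *
            ∫ ω, max (((n + 1 : ℕ) : ℝ) * r - ∑ i ∈ Finset.range (n + 1), D i ω) 0 ∂μ := by
  have hD2 : MemLp (D 0) 2 μ := by
    by_contra h
    exact hvar.ne' (variance_of_not_memLp hint.aestronglyMeasurable h)
  have hneg : ∫ ω, r - D 0 ω ∂μ < 0 := by
    rw [integral_sub (integrable_const r) hint, integral_const]
    simp [hr.2]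
  have hrewrite (j : ℕ) (ω : Ω) :
      (j : ℝ) * r - ∑ i ∈ range j, D i ω = ∑ i ∈ range j, (r - D i ω) := by
    simp [sum_sub_distrib]
  have hmeas_sub : Measurable fun t : ℝ => r - t := measurable_const.sub measurable_id
  obtain ⟨hsup, hsum⟩ := integrable_iSup_sum_and_hasSum (X := fun i ω => r - D i ω)
    (fun i => hmeas_sub.comp (hmeas i)) (hindep.comp _ fun _ => hmeas_sub)
    (fun i => (hident i).comp hmeas_sub) ((memLp_const r).sub hD2) hneg
  simp_rw [hrewrite]
  exact ⟨hsup, hsum.summable, hsum.tsum_eq.symm⟩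

/-- **Spitzer identity for the steady state (Kingman).** For i.i.d. nonnegative demands `D`
with finite positive mean and positive variance, for every `r ∈ [0, E[D])`, the r.v.
`I^r_∞ := sup_{j ≥ 0} (j r − Σ_{i=1}^j D_i)` has finite expectation, the series
`Σ_{n=1}^∞ (1/n) E[(n r − Σ_{i=1}^n D_i)⁺]` converges, and
`E[I^r_∞] = Σ_{n=1}^∞ (1/n) E[(n r − Σ_{i=1}^n D_i)⁺]`. -/
theorem stmt1
    {Ω : Type*} [MeasurableSpace Ω] (μ : Measure Ω) [IsProbabilityMeasure μ]
    (D : ℕ → Ω → ℝ)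
    (hmeas : ∀ i, Measurable (D i))
    (hindep : iIndepFun D μ)
    (hident : ∀ i, IdentDistrib (D i) (D 0) μ μ)
    (hnonneg : ∀ i ω, 0 ≤ D i ω)
    (hint : Integrable (D 0) μ)
    (hmean : 0 < ∫ ω, D 0 ω ∂μ)
    (hvar : 0 < variance (D 0) μ)
    (r : ℝ) (hr : r ∈ Set.Ico 0 (∫ ω, D 0 ω ∂μ)) :
    Integrable (fun ω => ⨆ j : ℕ, ((j : ℝ) * r - ∑ i ∈ Finset.range j, D i ω)) μ ∧
    Summable (fun n : ℕ =>
      ((n + 1 : ℕ) : ℝ)⁻¹ *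
        ∫ ω, max (((n + 1 : ℕ) : ℝ) * r - ∑ i ∈ Finset.range (n + 1), D i ω) 0 ∂μ) ∧
    ∫ ω, (⨆ j : ℕ, ((j : ℝ) * r - ∑ i ∈ Finset.range j, D i ω)) ∂μ
      = ∑' n : ℕ,
          ((n + 1 : ℕ) : ℝ)⁻¹ *
            ∫ ω, max (((n + 1 : ℕ) : ℝ) * r - ∑ i ∈ Finset.range (n + 1), D i ω) 0 ∂μ :=
  stmt1_general μ D hmeas hindep hident hint hvar r hr
end

section
/- Since D has strictly positive variance, E[I^r_∞] tends to infinity as r increases to E[D]: lim_{r ↑ E[D]} E[sup_{j ≥ 0} (j r − Σ_{i=1}^j D_i)] = ∞. -/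
/-!
For `r < E[D]` the increments `r - Dᵢ` are bounded above and have negative mean, so
`E[exp (θ (r - D))] < 1` for some `θ > 0`; the maximum of the walk `Sⱼ = ∑_{i<j} (r - Dᵢ)` is then
at most `θ⁻¹ ∑ⱼ exp (θ Sⱼ)`, whose mean is a geometric series, so `I^r_∞` is integrable.

For every `n`, `E[I^r_∞] ≥ E[(∑_{i<n} (r - Dᵢ))⁺] ≥ E[(∑_{i<n} (E[D] - Dᵢ))⁺] - n (E[D] - r)`.
The centred walk `∑_{i<n} (E[D] - Dᵢ)` is a martingale with mean zero, so the expectation of its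
positive part is half its `L¹` norm. Were these bounded, the martingale would converge almost
surely, hence `Dₙ → E[D]` almost surely; as the `Dₙ` are identically distributed, `D` would be
almost surely constant, contradicting `Var D > 0`.
-/

open MeasureTheory ProbabilityTheory Finset Filter Topology Real
open scoped ENNReal

lemma exp_mul_le_one_sub_add_mul_exp {t : ℝ} (x : ℝ) (ht₀ : 0 ≤ t) (ht₁ : t ≤ 1) :
    exp (t * x) ≤ 1 - t + t * exp x := by
  simpa using convexOn_exp.2 (Set.mem_univ 0) (Set.mem_univ x) (sub_nonneg.2 ht₁) ht₀
    (sub_add_cancel 1 t)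

section ExponentialMoment

variable {Ω : Type*} [MeasurableSpace Ω] {μ : Measure Ω} {X : Ω → ℝ} {c t : ℝ}

lemma integrable_exp_mul_of_le [IsFiniteMeasure μ] (hX : AEMeasurable X μ)
    (hXc : ∀ᵐ ω ∂μ, X ω ≤ c) (ht : 0 ≤ t) : Integrable (fun ω => exp (t * X ω)) μ := by
  refine Integrable.mono' (integrable_const (exp (t * c))) (by fun_prop) ?_
  filter_upwards [hXc] with ω hω
  rw [norm_of_nonneg (exp_pos _).le]
  exact exp_le_exp.2 (mul_le_mul_of_nonneg_left hω ht)

lemma exists_pos_mgf_lt_one [IsProbabilityMeasure μ] (hX : AEMeasurable X μ)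
    (hXc : ∀ᵐ ω ∂μ, X ω ≤ c) (hint : Integrable X μ) (hneg : μ[X] < 0) :
    ∃ θ, 0 < θ ∧ mgf X μ θ < 1 := by
  have hexp (t : ℝ) (ht : 0 ≤ t) := integrable_exp_mul_of_le hX hXc ht
  have hslope : Tendsto (fun t => ∫ ω, t⁻¹ * (exp (t * X ω) - 1) ∂μ) (𝓝[>] 0) (𝓝 μ[X]) := by
    refine tendsto_integral_filter_of_dominated_convergence (fun ω => |X ω| + exp (X ω) + 1)
      (Eventually.of_forall fun t => by fun_prop) ?_ ?_ (Eventually.of_forall fun ω => ?_)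
    · filter_upwards [Ioc_mem_nhdsGT one_pos] with t ⟨ht₀, ht₁⟩
      refine Eventually.of_forall fun ω => ?_
      have hlow : X ω ≤ t⁻¹ * (exp (t * X ω) - 1) := by
        rw [le_inv_mul_iff₀ ht₀]; linarith [add_one_le_exp (t * X ω)]
      have hup : t⁻¹ * (exp (t * X ω) - 1) ≤ exp (X ω) - 1 := by
        rw [inv_mul_le_iff₀ ht₀]; linarith [exp_mul_le_one_sub_add_mul_exp (X ω) ht₀.le ht₁]
      rw [norm_eq_abs, abs_le]
      constructor <;> linarith [neg_abs_le (X ω), abs_nonneg (X ω), exp_pos (X ω)]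
    · exact ((hint.abs.add (by simpa using hexp 1 zero_le_one)).add (integrable_const 1))
    · have hderiv : HasDerivAt (fun t => exp (t * X ω)) (X ω) 0 := by
        simpa using ((hasDerivAt_id (0 : ℝ)).mul_const (X ω)).exp
      refine ((hasDerivAt_iff_tendsto_slope.1 hderiv).mono_left (nhdsGT_le_nhdsNE 0)).congr
        fun t => ?_
      simp [slope_def_field, div_eq_inv_mul]
  obtain ⟨θ, hθneg, hθ⟩ := ((hslope.eventually (gt_mem_nhds hneg)).and self_mem_nhdsWithin).exists
  refine ⟨θ, hθ, ?_⟩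
  rw [integral_const_mul, integral_sub (hexp θ hθ.le) (integrable_const 1)] at hθneg
  simp only [integral_const, probReal_univ, smul_eq_mul, one_mul] at hθneg
  exact sub_neg.1 (neg_of_mul_neg_right hθneg (inv_nonneg.2 hθ.le))

end ExponentialMoment

lemma le_toReal_tsum_exp_mul_div {s : ℕ → ℝ} {θ : ℝ} (hθ : 0 < θ)
    (h : ∑' j, ENNReal.ofReal (exp (θ * s j)) ≠ ∞) (j : ℕ) :
    s j ≤ (∑' j, ENNReal.ofReal (exp (θ * s j))).toReal / θ := by
  rw [le_div_iff₀' hθ]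
  calc θ * s j ≤ exp (θ * s j) := by linarith [add_one_le_exp (θ * s j)]
    _ ≤ _ := (ENNReal.ofReal_le_iff_le_toReal h).1 (ENNReal.le_tsum j)

section RandomWalk

variable {Ω : Type*} [MeasurableSpace Ω] {μ : Measure Ω} [IsProbabilityMeasure μ]
  {X : ℕ → Ω → ℝ} {θ : ℝ}

lemma lintegral_tsum_exp_mul_sum_lt_top (hmeas : ∀ i, Measurable (X i))
    (hindep : iIndepFun X μ) (hident : ∀ i, IdentDistrib (X i) (X 0) μ μ)
    (hexp : Integrable (fun ω => exp (θ * X 0 ω)) μ) (hρ : mgf (X 0) μ θ < 1) :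
    ∫⁻ ω, ∑' j, ENNReal.ofReal (exp (θ * ∑ i ∈ range j, X i ω)) ∂μ < ∞ := by
  have hexp_i (i : ℕ) : Integrable (fun ω => exp (θ * X i ω)) μ :=
    ((hident i).comp (measurable_const_mul θ).exp).integrable_iff.2 hexp
  have hterm (j : ℕ) : ∫⁻ ω, ENNReal.ofReal (exp (θ * ∑ i ∈ range j, X i ω)) ∂μ
      = ENNReal.ofReal (mgf (X 0) μ θ ^ j) := by
    have hsum := hindep.integrable_exp_mul_sum hmeas (s := range j) fun i _ => hexp_i i
    simp only [Finset.sum_apply] at hsum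
    rw [← ofReal_integral_eq_lintegral_ofReal hsum (ae_of_all _ fun ω => (exp_pos _).le)]
    have hmgf := hindep.mgf_sum hmeas (range j) (t := θ)
    rw [prod_congr rfl fun i _ => mgf_congr_of_identDistrib _ _ (hident i) θ, prod_const,
      card_range] at hmgf
    rw [← hmgf, mgf]
    simp only [Finset.sum_apply]
  have hρ₀ : 0 ≤ mgf (X 0) μ θ := mgf_nonneg
  rw [lintegral_tsum fun j => by fun_prop]
  simp_rw [hterm]
  rw [← ENNReal.ofReal_tsum_of_nonneg (fun j => pow_nonneg hρ₀ j)
    (summable_geometric_of_lt_one hρ₀ hρ)]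
  exact ENNReal.ofReal_lt_top

theorem ae_bddAbove_and_integrable_iSup_sum (hmeas : ∀ i, Measurable (X i))
    (hindep : iIndepFun X μ) (hident : ∀ i, IdentDistrib (X i) (X 0) μ μ) (hθ : 0 < θ)
    (hexp : Integrable (fun ω => exp (θ * X 0 ω)) μ) (hρ : mgf (X 0) μ θ < 1) :
    (∀ᵐ ω ∂μ, BddAbove (Set.range fun j => ∑ i ∈ range j, X i ω)) ∧
      Integrable (fun ω => ⨆ j, ∑ i ∈ range j, X i ω) μ := by
  set W : Ω → ℝ≥0∞ := fun ω => ∑' j, ENNReal.ofReal (exp (θ * ∑ i ∈ range j, X i ω))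
  have hW_meas : Measurable W := by fun_prop
  have hW_lt := lintegral_tsum_exp_mul_sum_lt_top hmeas hindep hident hexp hρ
  have hW_fin : ∀ᵐ ω ∂μ, W ω ≠ ∞ := (ae_lt_top hW_meas hW_lt.ne).mono fun ω => ne_of_lt
  have hbdd : ∀ᵐ ω ∂μ, BddAbove (Set.range fun j => ∑ i ∈ range j, X i ω) := by
    filter_upwards [hW_fin] with ω hω
    exact ⟨_, Set.forall_mem_range.2 (le_toReal_tsum_exp_mul_div hθ hω)⟩
  refine ⟨hbdd, Integrable.mono' ((integrable_toReal_of_lintegral_ne_top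
    hW_meas.aemeasurable hW_lt.ne).div_const θ)
    (Measurable.iSup fun j => by fun_prop).aestronglyMeasurable ?_⟩
  filter_upwards [hW_fin, hbdd] with ω hω hbddω
  have hsup_nonneg : 0 ≤ ⨆ j, ∑ i ∈ range j, X i ω :=
    le_ciSup_of_le hbddω 0 (by simp)
  rw [norm_of_nonneg hsup_nonneg]
  exact ciSup_le (le_toReal_tsum_exp_mul_div hθ hω)

end RandomWalk

section CenteredWalk

variable {Ω : Type*} [MeasurableSpace Ω] {μ : Measure Ω} [IsProbabilityMeasure μ]
  {Y : ℕ → Ω → ℝ}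

theorem ProbabilityTheory.iIndepFun.martingale_sum_range_succ (hindep : iIndepFun Y μ)
    (hmeas : ∀ i, Measurable (Y i)) (hint : ∀ i, Integrable (Y i) μ) (hmean : ∀ i, μ[Y i] = 0) :
    Martingale (fun n ω => ∑ i ∈ range (n + 1), Y i ω)
      (Filtration.natural Y fun i => (hmeas i).stronglyMeasurable) μ := by
  set 𝒢 := Filtration.natural Y fun i => (hmeas i).stronglyMeasurable
  have hadapted := Filtration.stronglyAdapted_natural (fun i => (hmeas i).stronglyMeasurable)
  refine martingale_of_condExp_sub_eq_zero_nat (fun n => ?_)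
    (fun n => integrable_finsetSum _ fun i _ => hint i) fun n => ?_
  · refine Finset.stronglyMeasurable_fun_sum _ fun i hi => (hadapted i).mono (𝒢.mono ?_)
    exact Nat.lt_succ_iff.1 (mem_range.1 hi)
  · have hincr : (fun ω => ∑ i ∈ range (n + 1 + 1), Y i ω)
        - (fun ω => ∑ i ∈ range (n + 1), Y i ω) = Y (n + 1) := by
      funext ω; simp [sum_range_succ _ (n + 1)]
    have hindep_past : Indep (MeasurableSpace.comap (Y (n + 1)) inferInstance) (𝒢 n) μ := by
      have := indep_iSup_of_disjoint (fun i => (hmeas i).comap_le) hindep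
        (S := {n + 1}) (T := Set.Iic n) (by simp)
      rwa [_root_.iSup_singleton] at this
    rw [hincr]
    refine (condExp_indep_eq (hmeas (n + 1)).comap_le (𝒢.le n) ?_ hindep_past).trans ?_
    · exact (measurable_iff_comap_le.2 le_rfl).stronglyMeasurable
    · rw [hmean]; rfl

theorem ae_tendsto_zero_of_integral_abs_sum_le (hmeas : ∀ i, Measurable (Y i))
    (hindep : iIndepFun Y μ) (hint : ∀ i, Integrable (Y i) μ) (hmean : ∀ i, μ[Y i] = 0)
    {R : ℝ} (hR : ∀ n, ∫ ω, |∑ i ∈ range n, Y i ω| ∂μ ≤ R) :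
    ∀ᵐ ω ∂μ, Tendsto (fun n => Y n ω) atTop (𝓝 0) := by
  have hmart := hindep.martingale_sum_range_succ hmeas hint hmean
  have hL1 (n : ℕ) : eLpNorm (fun ω => ∑ i ∈ range (n + 1), Y i ω) 1 μ ≤ ENNReal.ofReal R := by
    rw [eLpNorm_one_eq_lintegral_enorm, ← ofReal_integral_norm_eq_lintegral_enorm
      (integrable_finsetSum _ fun i _ => hint i)]
    exact ENNReal.ofReal_le_ofReal (hR (n + 1))
  filter_upwards [hmart.submartingale.exists_ae_tendsto_of_bdd hL1] with ω ⟨c, hc⟩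
  have hincr : Tendsto (fun n => ∑ i ∈ range (n + 1 + 1), Y i ω - ∑ i ∈ range (n + 1), Y i ω)
      atTop (𝓝 (c - c)) := ((tendsto_add_atTop_iff_nat 1).2 hc).sub hc
  rw [sub_self] at hincr
  refine (tendsto_add_atTop_iff_nat 1).1 (hincr.congr fun n => ?_)
  rw [sum_range_succ _ (n + 1), add_sub_cancel_left]

theorem ae_eq_const_of_identDistrib_of_ae_tendsto {Z : ℕ → Ω → ℝ}
    (hmeas : ∀ n, Measurable (Z n)) (hident : ∀ n, IdentDistrib (Z n) (Z 0) μ μ) {c : ℝ}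
    (hlim : ∀ᵐ ω ∂μ, Tendsto (fun n => Z n ω) atTop (𝓝 c)) : Z 0 =ᵐ[μ] fun _ => c := by
  set g : ℝ → ℝ := fun x => min |x - c| 1
  have hg : Continuous g := by fun_prop
  have hg_nonneg (x : ℝ) : 0 ≤ g x := le_min (abs_nonneg _) zero_le_one
  have hg_le (x : ℝ) : ‖g x‖ ≤ 1 := by
    rw [norm_of_nonneg (hg_nonneg x)]; exact min_le_right _ _
  have hgZ_meas (n : ℕ) : AEStronglyMeasurable (fun ω => g (Z n ω)) μ :=
    (hg.measurable.comp (hmeas n)).aestronglyMeasurable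
  have hlim_g : Tendsto (fun n => ∫ ω, g (Z n ω) ∂μ) atTop (𝓝 (∫ _, g c ∂μ)) :=
    tendsto_integral_of_dominated_convergence (fun _ => 1) hgZ_meas (integrable_const 1)
      (fun n => ae_of_all _ fun ω => hg_le _)
      (by filter_upwards [hlim] with ω hω using (hg.tendsto c).comp hω)
  have hconst (n : ℕ) : ∫ ω, g (Z n ω) ∂μ = ∫ ω, g (Z 0 ω) ∂μ :=
    ((hident n).comp hg.measurable).integral_eq
  have hzero : ∫ ω, g (Z 0 ω) ∂μ = 0 := by
    simpa [g, hconst] using hlim_g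
  filter_upwards [(integral_eq_zero_iff_of_nonneg (fun ω => hg_nonneg _)
    (Integrable.of_bound (hgZ_meas 0) 1 (ae_of_all _ fun ω => hg_le _))).1 hzero] with ω hω
  simp only [g, Pi.zero_apply, min_eq_iff, one_ne_zero, false_and, or_false, abs_eq_zero,
    sub_eq_zero] at hω
  exact hω.1

end CenteredWalk

section Integrals

variable {Ω : Type*} [MeasurableSpace Ω] {μ : Measure Ω}

lemma integral_abs_eq_two_mul_integral_max {f : Ω → ℝ} (hf : Integrable f μ)
    (hmean : ∫ ω, f ω ∂μ = 0) : ∫ ω, |f ω| ∂μ = 2 * ∫ ω, max (f ω) 0 ∂μ := by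
  have habs : (fun ω => |f ω|) = fun ω => 2 * max (f ω) 0 - f ω := by
    funext ω
    rcases le_total 0 (f ω) with h | h
    · rw [abs_of_nonneg h, max_eq_left h]; ring
    · rw [abs_of_nonpos h, max_eq_right h]; ring
  rw [habs, integral_sub (hf.pos_part.const_mul 2) hf, hmean, sub_zero, integral_const_mul]

lemma integral_max_add_le [IsProbabilityMeasure μ] {f : Ω → ℝ} (hf : Integrable f μ) {a : ℝ}
    (ha : 0 ≤ a) :
    ∫ ω, max (f ω + a) 0 ∂μ ≤ ∫ ω, max (f ω) 0 ∂μ + a := by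
  have hpt (ω : Ω) : max (f ω + a) 0 ≤ max (f ω) 0 + a :=
    max_le (by linarith [le_max_left (f ω) 0]) (by linarith [le_max_right (f ω) 0])
  calc ∫ ω, max (f ω + a) 0 ∂μ ≤ ∫ ω, (max (f ω) 0 + a) ∂μ :=
        integral_mono (hf.add (integrable_const a)).pos_part
          (hf.pos_part.add (integrable_const a)) hpt
    _ = ∫ ω, max (f ω) 0 ∂μ + a := by
        rw [integral_add hf.pos_part (integrable_const a)]; simp

lemma integral_max_sum_le_integral_iSup {X : ℕ → Ω → ℝ} (n : ℕ)
    (hint : Integrable (fun ω => ∑ i ∈ range n, X i ω) μ)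
    (hbdd : ∀ᵐ ω ∂μ, BddAbove (Set.range fun j => ∑ i ∈ range j, X i ω))
    (hsup : Integrable (fun ω => ⨆ j, ∑ i ∈ range j, X i ω) μ) :
    ∫ ω, max (∑ i ∈ range n, X i ω) 0 ∂μ ≤ ∫ ω, ⨆ j, ∑ i ∈ range j, X i ω ∂μ := by
  refine integral_mono_ae hint.pos_part hsup ?_
  filter_upwards [hbdd] with ω hω
  exact max_le (le_ciSup hω n) (le_ciSup_of_le hω 0 (by simp))

end Integrals

section IIDSequence

variable {Ω : Type*} [MeasurableSpace Ω] {μ : Measure Ω} [IsProbabilityMeasure μ]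
  {D : ℕ → Ω → ℝ}

theorem ae_bddAbove_and_integrable_iSup_sum_sub (hmeas : ∀ i, Measurable (D i))
    (hindep : iIndepFun D μ) (hident : ∀ i, IdentDistrib (D i) (D 0) μ μ) {a : ℝ}
    (hbelow : ∀ᵐ ω ∂μ, a ≤ D 0 ω) (hint : Integrable (D 0) μ) {r : ℝ} (hr : r < μ[D 0]) :
    (∀ᵐ ω ∂μ, BddAbove (Set.range fun j => ∑ i ∈ range j, (r - D i ω))) ∧
      Integrable (fun ω => ⨆ j, ∑ i ∈ range j, (r - D i ω)) μ := by
  have hX_meas : Measurable fun ω => r - D 0 ω := measurable_const.sub (hmeas 0)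
  have hX_le : ∀ᵐ ω ∂μ, r - D 0 ω ≤ r - a := by
    filter_upwards [hbelow] with ω hω using by linarith
  have hX_mean : μ[fun ω => r - D 0 ω] < 0 := by
    rw [integral_sub (integrable_const r) hint]; simp [hr]
  obtain ⟨θ, hθ, hρ⟩ := exists_pos_mgf_lt_one hX_meas.aemeasurable hX_le
    ((integrable_const r).sub hint) hX_mean
  exact ae_bddAbove_and_integrable_iSup_sum (fun i => measurable_const.sub (hmeas i))
    (hindep.comp _ fun i => measurable_const.sub measurable_id)
    (fun i => (hident i).comp (measurable_const.sub measurable_id)) hθ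
    (integrable_exp_mul_of_le hX_meas.aemeasurable hX_le hθ.le) hρ

theorem exists_lt_integral_max_sum_integral_sub (hmeas : ∀ i, Measurable (D i))
    (hindep : iIndepFun D μ) (hident : ∀ i, IdentDistrib (D i) (D 0) μ μ)
    (hint : Integrable (D 0) μ) (hvar : 0 < variance (D 0) μ) (b : ℝ) :
    ∃ n : ℕ, b < ∫ ω, max (∑ i ∈ range n, (μ[D 0] - D i ω)) 0 ∂μ := by
  by_contra! hle
  set m := μ[D 0]
  set Y : ℕ → Ω → ℝ := fun i ω => m - D i ω
  have hY_meas (i : ℕ) : Measurable (Y i) := measurable_const.sub (hmeas i)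
  have hY_int (i : ℕ) : Integrable (Y i) μ :=
    (integrable_const m).sub ((hident i).integrable_iff.2 hint)
  have hY_mean (i : ℕ) : μ[Y i] = 0 := by
    rw [integral_sub (integrable_const m) ((hident i).integrable_iff.2 hint),
      (hident i).integral_eq]
    simp [m]
  have hsum_abs (n : ℕ) : ∫ ω, |∑ i ∈ range n, Y i ω| ∂μ ≤ 2 * b := by
    rw [integral_abs_eq_two_mul_integral_max (integrable_finsetSum _ fun i _ => hY_int i)
      (by rw [integral_finsetSum _ fun i _ => hY_int i]; simp [hY_mean])]
    linarith [hle n]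
  have hY_lim := ae_tendsto_zero_of_integral_abs_sum_le hY_meas
    (hindep.comp _ fun i => measurable_const.sub measurable_id) hY_int hY_mean hsum_abs
  have hY₀ : Y 0 =ᵐ[μ] fun _ => 0 := ae_eq_const_of_identDistrib_of_ae_tendsto hY_meas
    (fun i => (hident i).comp (measurable_const.sub measurable_id)) hY_lim
  have hD₀ : D 0 =ᵐ[μ] fun _ => m := by
    filter_upwards [hY₀] with ω hω
    exact (sub_eq_zero.1 hω).symm
  have := (evariance_eq_zero_iff (hmeas 0).aemeasurable).2 hD₀
  simp [variance, this] at hvar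

end IIDSequence

theorem stmt6_general
    {Ω : Type*} [MeasurableSpace Ω] (μ : Measure Ω) [IsProbabilityMeasure μ]
    (D : ℕ → Ω → ℝ)
    (hmeas : ∀ i, Measurable (D i))
    (hindep : iIndepFun D μ)
    (hident : ∀ i, IdentDistrib (D i) (D 0) μ μ)
    (hnonneg : ∀ i ω, 0 ≤ D i ω)
    (hint : Integrable (D 0) μ)
    (hvar : 0 < variance (D 0) μ) :
    Tendsto (fun r : ℝ => ∫ ω, (⨆ j : ℕ, ((j : ℝ) * r - ∑ i ∈ Finset.range j, D i ω)) ∂μ)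
      (nhdsWithin (∫ ω, D 0 ω ∂μ) (Set.Iio (∫ ω, D 0 ω ∂μ))) atTop := by
  set m := ∫ ω, D 0 ω ∂μ
  have hsum (r : ℝ) (j : ℕ) (ω : Ω) :
      (j : ℝ) * r - ∑ i ∈ range j, D i ω = ∑ i ∈ range j, (r - D i ω) := by
    simp [sum_sub_distrib]
  simp_rw [hsum]
  refine tendsto_atTop.2 fun b => ?_
  obtain ⟨n, hn⟩ := exists_lt_integral_max_sum_integral_sub hmeas hindep hident hint hvar (b + 1)
  have hclose : ∀ᶠ r in 𝓝[<] m, (n : ℝ) * (m - r) < 1 :=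
    nhdsWithin_le_nhds <| (Continuous.tendsto (by fun_prop) m).eventually (gt_mem_nhds (by simp))
  filter_upwards [hclose, self_mem_nhdsWithin] with r hclose_r (hrm : r < m)
  obtain ⟨hbdd, hsup⟩ := ae_bddAbove_and_integrable_iSup_sum_sub hmeas hindep hident
    (ae_of_all _ (hnonneg 0)) hint hrm
  have hsum_int : Integrable (fun ω => ∑ i ∈ range n, (r - D i ω)) μ :=
    integrable_finsetSum _ fun i _ => (integrable_const r).sub ((hident i).integrable_iff.2 hint)
  have hshift (ω : Ω) :
      ∑ i ∈ range n, (m - D i ω) = ∑ i ∈ range n, (r - D i ω) + n * (m - r) := by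
    simp only [sum_sub_distrib, sum_const, card_range, nsmul_eq_mul]; ring
  calc b ≤ ∫ ω, max (∑ i ∈ range n, (m - D i ω)) 0 ∂μ - n * (m - r) := by linarith
    _ ≤ ∫ ω, max (∑ i ∈ range n, (r - D i ω)) 0 ∂μ := by
      simp_rw [hshift]
      linarith [integral_max_add_le hsum_int (mul_nonneg n.cast_nonneg (sub_nonneg.2 hrm.le))]
    _ ≤ ∫ ω, ⨆ j, ∑ i ∈ range j, (r - D i ω) ∂μ :=
      integral_max_sum_le_integral_iSup n hsum_int hbdd hsup

/-- Since `D` has strictly positive variance, `E[I^r_∞] → ∞` as `r ↑ E[D]`. -/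
theorem stmt6
    {Ω : Type*} [MeasurableSpace Ω] (μ : Measure Ω) [IsProbabilityMeasure μ]
    (D : ℕ → Ω → ℝ)
    (hmeas : ∀ i, Measurable (D i))
    (hindep : iIndepFun D μ)
    (hident : ∀ i, IdentDistrib (D i) (D 0) μ μ)
    (hnonneg : ∀ i ω, 0 ≤ D i ω)
    (hint : Integrable (D 0) μ)
    (hmean : 0 < ∫ ω, D 0 ω ∂μ)
    (hvar : 0 < variance (D 0) μ) :
    Tendsto (fun r : ℝ => ∫ ω, (⨆ j : ℕ, ((j : ℝ) * r - ∑ i ∈ Finset.range j, D i ω)) ∂μ)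
      (nhdsWithin (∫ ω, D 0 ω ∂μ) (Set.Iio (∫ ω, D 0 ω ∂μ))) atTop :=
  stmt6_general μ D hmeas hindep hident hnonneg hint hvar
end

section
/- For every integer L ≥ 1, r_∞ ≤ r_L. That is, the infimum of the set of minimizers of the infinite-horizon cost C_∞ over [0, E[D]) is at most the infimum of the set of minimizers of the truncated cost C_L over [0, E[D]]. -/
/-!
Write `I^r_L` and `I^r_∞` as running maxima of the walk `j ↦ j r - (D_0 + ⋯ + D_{j-1})`. For
`s ≤ t` the walk at rate `t` gains `j (t - s)` on the one at rate `s`, a gain that grows with `j`;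
hence, pointwise, `I^s_∞ - I^t_∞ ≤ I^s_L - I^t_L`. So if `s` minimizes `C_L` and some `t > s`
minimizes `C_∞`, then `C_∞ s - C_∞ t ≤ C_L s - C_L t ≤ 0`, and `s` minimizes `C_∞` as well.

Taking expectations needs `I^r_∞` integrable for `r < E[D]`: a Chernoff bound gives `θ > 0` with
`φ := E[exp (θ (r - D))] < 1`, hence `E[(j r - S_j)⁺] ≤ φ^j / θ`, which is summable.
-/

open MeasureTheory ProbabilityTheory Finset Filter

def walk (d : ℕ → ℝ) (r : ℝ) (j : ℕ) : ℝ := j * r - ∑ i ∈ range j, d i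

def walkMax (d : ℕ → ℝ) (L : ℕ) (r : ℝ) : ℝ :=
  (range (L + 1)).sup' nonempty_range_add_one (walk d r)

section Deterministic

variable (d : ℕ → ℝ)

lemma walk_zero (r : ℝ) : walk d r 0 = 0 := by simp [walk]

lemma walk_eq_sum (r : ℝ) (j : ℕ) : walk d r j = ∑ i ∈ range j, (r - d i) := by
  simp [walk, sum_sub_distrib]

lemma walk_sub_walk (s t : ℝ) (j : ℕ) : walk d t j - walk d s j = j * (t - s) := by
  simp only [walk]; ring

lemma iSup_walk_nonneg (r : ℝ) : 0 ≤ ⨆ j, walk d r j :=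
  Real.iSup_nonneg' ⟨0, (walk_zero d r).ge⟩

lemma walk_le_walkMax {L j : ℕ} (hj : j ≤ L) (r : ℝ) : walk d r j ≤ walkMax d L r :=
  le_sup' (walk d r) (mem_range_succ_iff.2 hj)

lemma walkMax_nonneg (L : ℕ) (r : ℝ) : 0 ≤ walkMax d L r :=
  (walk_zero d r).ge.trans (walk_le_walkMax d L.zero_le r)

lemma walkMax_le_of_nonneg (hd : ∀ i, 0 ≤ d i) (L : ℕ) (r : ℝ) : walkMax d L r ≤ L * |r| := by
  refine sup'_le _ _ fun j hj => ?_
  have hjL : (j : ℝ) ≤ L := by exact_mod_cast mem_range_succ_iff.1 hj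
  have : 0 ≤ ∑ i ∈ range j, d i := sum_nonneg fun i _ => hd i
  calc walk d r j ≤ j * |r| := by
        unfold walk; nlinarith [le_abs_self r, (j.cast_nonneg : (0 : ℝ) ≤ j)]
    _ ≤ L * |r| := by gcongr

lemma walkMax_sub_walkMax_le (L : ℕ) (r₁ r₂ : ℝ) :
    walkMax d L r₁ - walkMax d L r₂ ≤ L * |r₁ - r₂| := by
  rw [sub_le_iff_le_add]
  refine sup'_le _ _ fun j hj => ?_
  have hjL : (j : ℝ) ≤ L := by exact_mod_cast mem_range_succ_iff.1 hj
  have hshift : walk d r₁ j - walk d r₂ j ≤ L * |r₁ - r₂| := by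
    rw [walk_sub_walk]
    calc (j : ℝ) * (r₁ - r₂) ≤ j * |r₁ - r₂| := by gcongr; exact le_abs_self _
      _ ≤ L * |r₁ - r₂| := by gcongr
  linarith [walk_le_walkMax d (mem_range_succ_iff.1 hj) r₂]

lemma abs_walkMax_sub_walkMax_le (L : ℕ) (r₁ r₂ : ℝ) :
    |walkMax d L r₁ - walkMax d L r₂| ≤ L * |r₁ - r₂| :=
  abs_sub_le_iff.2 ⟨walkMax_sub_walkMax_le d L r₁ r₂,
    abs_sub_comm r₁ r₂ ▸ walkMax_sub_walkMax_le d L r₂ r₁⟩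

lemma iSup_walk_add_walkMax_le (L : ℕ) {s t : ℝ} (hst : s ≤ t)
    (ht : BddAbove (Set.range (walk d t))) :
    (⨆ j, walk d s j) + walkMax d L t ≤ (⨆ j, walk d t j) + walkMax d L s := by
  suffices ∀ j, walk d s j ≤ (⨆ j, walk d t j) + walkMax d L s - walkMax d L t by
    linarith [ciSup_le this]
  intro j
  rcases le_or_gt j L with hjL | hLj
  · have : walkMax d L t ≤ ⨆ j, walk d t j := sup'_le _ _ fun k _ => le_ciSup ht k
    linarith [walk_le_walkMax d hjL s]
  · obtain ⟨k, hk, hmax⟩ := exists_mem_eq_sup' nonempty_range_add_one (walk d t)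
    have hkj : (k : ℝ) ≤ j := by exact_mod_cast (mem_range_succ_iff.1 hk).trans hLj.le
    have : (k : ℝ) * (t - s) ≤ j * (t - s) := by gcongr
    -- `walk s j = walk t j - j (t - s) ≤ ⨆ walk t - k (t - s) = ⨆ walk t - walkMax t + walk s k`
    have := walk_sub_walk d s t j
    have := walk_sub_walk d s t k
    have hmax : walkMax d L t = walk d t k := hmax
    linarith [le_ciSup ht j, walk_le_walkMax d (mem_range_succ_iff.1 hk) s]

end Deterministic

lemma le_toReal_tsum_ofReal {f : ℕ → ℝ} (hf : ∑' j, ENNReal.ofReal (f j) ≠ ⊤) (j : ℕ) :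
    f j ≤ (∑' j, ENNReal.ofReal (f j)).toReal :=
  calc f j ≤ (ENNReal.ofReal (f j)).toReal := by
        rw [ENNReal.toReal_ofReal']; exact le_max_left _ _
    _ ≤ _ := ENNReal.toReal_mono hf (ENNReal.le_tsum j)

lemma ofReal_iSup_le_tsum_ofReal (f : ℕ → ℝ) :
    ENNReal.ofReal (⨆ j, f j) ≤ ∑' j, ENNReal.ofReal (f j) := by
  by_cases hf : ∑' j, ENNReal.ofReal (f j) = ⊤
  · exact hf ▸ le_top
  · exact ENNReal.ofReal_le_of_le_toReal (ciSup_le (le_toReal_tsum_ofReal hf))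

lemma bddAbove_range_of_tsum_ofReal_ne_top {f : ℕ → ℝ}
    (hf : ∑' j, ENNReal.ofReal (f j) ≠ ⊤) : BddAbove (Set.range f) :=
  ⟨_, Set.forall_mem_range.2 (le_toReal_tsum_ofReal hf)⟩

lemma exp_neg_le_one_sub_add_sq {u : ℝ} (hu : 0 ≤ u) : Real.exp (-u) ≤ 1 - u + u ^ 2 := by
  have h1 : 1 + u ≤ Real.exp u := by linarith [Real.add_one_le_exp u]
  have h2 : Real.exp (-u) * Real.exp u = 1 := by rw [← Real.exp_add]; simp
  nlinarith [Real.exp_pos (-u)]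

lemma le_inv_mul_exp_mul {θ : ℝ} (hθ : 0 < θ) (u : ℝ) : u ≤ θ⁻¹ * Real.exp (θ * u) :=
  (le_inv_mul_iff₀ hθ).2 (by linarith [Real.add_one_le_exp (θ * u)])

section Measure

variable {Ω : Type*} [MeasurableSpace Ω] {μ : Measure Ω}

lemma ae_bddAbove_range_of_lintegral_tsum_ofReal_lt_top {F : ℕ → Ω → ℝ}
    (hF : ∀ j, Measurable (F j)) (hfin : ∫⁻ ω, ∑' j, ENNReal.ofReal (F j ω) ∂μ < ⊤) :
    ∀ᵐ ω ∂μ, BddAbove (Set.range fun j => F j ω) := by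
  have hmeas : Measurable fun ω => ∑' j, ENNReal.ofReal (F j ω) :=
    Measurable.tsum fun j => (hF j).ennreal_ofReal
  filter_upwards [ae_lt_top hmeas hfin.ne] with ω hω
  exact bddAbove_range_of_tsum_ofReal_ne_top hω.ne

lemma integrable_iSup_of_lintegral_tsum_ofReal_lt_top {F : ℕ → Ω → ℝ}
    (hF : ∀ j, Measurable (F j)) (h0 : ∀ ω, 0 ≤ ⨆ j, F j ω)
    (hfin : ∫⁻ ω, ∑' j, ENNReal.ofReal (F j ω) ∂μ < ⊤) :
    Integrable (fun ω => ⨆ j, F j ω) μ := by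
  refine ⟨(Measurable.iSup hF).aestronglyMeasurable, ?_⟩
  rw [hasFiniteIntegral_iff_ofReal (ae_of_all _ h0)]
  exact (lintegral_mono fun ω => ofReal_iSup_le_tsum_ofReal _).trans_lt hfin

lemma exists_mgf_const_sub_lt_one [IsProbabilityMeasure μ] {Y : Ω → ℝ} (hY0 : 0 ≤ᵐ[μ] Y)
    (hY : MemLp Y 2 μ) {r : ℝ} (hr : r < ∫ ω, Y ω ∂μ) :
    ∃ θ > 0, mgf (fun ω => r - Y ω) μ θ < 1 := by
  set m := ∫ ω, Y ω ∂μ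
  set K := ∫ ω, Y ω ^ 2 ∂μ
  have hK : 0 ≤ K := integral_nonneg fun ω => sq_nonneg _
  set θ := (m - r) / (K + 1)
  have hθ : 0 < θ := div_pos (by linarith) (by linarith)
  have hθK : θ * K < m - r := by
    rw [div_mul_eq_mul_div, div_lt_iff₀ (by linarith)]
    nlinarith
  refine ⟨θ, hθ, ?_⟩
  have hexp : Integrable (fun ω => Real.exp (-(θ * Y ω))) μ := by
    have := hY.aestronglyMeasurable
    refine .of_bound (by fun_prop) 1 ?_
    filter_upwards [hY0] with ω hω
    rw [Real.norm_of_nonneg (Real.exp_pos _).le, Real.exp_le_one_iff]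
    exact neg_nonpos.2 (mul_nonneg hθ.le hω)
  have hY1 : Integrable Y μ := hY.integrable one_le_two
  have hlin : Integrable (fun ω => θ * Y ω) μ := hY1.const_mul θ
  have hsq : Integrable (fun ω => θ ^ 2 * Y ω ^ 2) μ := hY.integrable_sq.const_mul _
  have hone_sub : Integrable (fun ω => 1 - θ * Y ω) μ := (integrable_const 1).sub hlin
  have hpoly : Integrable (fun ω => 1 - θ * Y ω + θ ^ 2 * Y ω ^ 2) μ := hone_sub.add hsq
  have hbound : ∫ ω, Real.exp (-(θ * Y ω)) ∂μ ≤ 1 - θ * m + θ ^ 2 * K := by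
    calc ∫ ω, Real.exp (-(θ * Y ω)) ∂μ ≤ ∫ ω, (1 - θ * Y ω + θ ^ 2 * Y ω ^ 2) ∂μ := by
          refine integral_mono_ae hexp hpoly ?_
          filter_upwards [hY0] with ω hω
          linarith [exp_neg_le_one_sub_add_sq (mul_nonneg hθ.le hω)]
      _ = 1 - θ * m + θ ^ 2 * K := by
          rw [integral_add hone_sub hsq,
            integral_sub (integrable_const 1) hlin, integral_const_mul, integral_const_mul]
          simp [m, K]
  have hstrict : 1 - θ * m + θ ^ 2 * K < Real.exp (-(θ * r)) := by
    nlinarith [Real.one_sub_le_exp_neg (θ * r)]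
  calc mgf (fun ω => r - Y ω) μ θ = Real.exp (θ * r) * ∫ ω, Real.exp (-(θ * Y ω)) ∂μ := by
        rw [mgf, ← integral_const_mul]
        congr 1 with ω
        rw [← Real.exp_add]; ring_nf
    _ < Real.exp (θ * r) * Real.exp (-(θ * r)) := by gcongr; exact hbound.trans_lt hstrict
    _ = 1 := by rw [← Real.exp_add]; simp

lemma lintegral_tsum_ofReal_sum_lt_top [IsProbabilityMeasure μ] {X : ℕ → Ω → ℝ}
    (hX : ∀ i, Measurable (X i)) (hindep : iIndepFun X μ)
    (hident : ∀ i, IdentDistrib (X i) (X 0) μ μ) {θ : ℝ} (hθ : 0 < θ)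
    (hexp : Integrable (fun ω => Real.exp (θ * X 0 ω)) μ) (hmgf : mgf (X 0) μ θ < 1) :
    ∫⁻ ω, ∑' j, ENNReal.ofReal (∑ i ∈ range j, X i ω) ∂μ < ⊤ := by
  set q := mgf (X 0) μ θ
  have hexp_sum : ∀ j, Integrable (fun ω => Real.exp (θ * ∑ i ∈ range j, X i ω)) μ := by
    intro j
    simpa only [Finset.sum_apply] using hindep.integrable_exp_mul_sum hX fun i _ =>
      ((hident i).comp (measurable_const_mul θ).exp).integrable_iff.2 hexp
  have hmoment : ∀ j, ∫⁻ ω, ENNReal.ofReal (∑ i ∈ range j, X i ω) ∂μ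
      ≤ ENNReal.ofReal (θ⁻¹ * q ^ j) := by
    intro j
    have hsum : mgf (∑ i ∈ range j, X i) μ θ = q ^ j := by
      rw [hindep.mgf_sum hX, prod_congr rfl fun i _ => mgf_congr_of_identDistrib _ _ (hident i) θ,
        prod_const, card_range]
    calc ∫⁻ ω, ENNReal.ofReal (∑ i ∈ range j, X i ω) ∂μ
        ≤ ∫⁻ ω, ENNReal.ofReal (θ⁻¹ * Real.exp (θ * ∑ i ∈ range j, X i ω)) ∂μ :=
          lintegral_mono fun ω => ENNReal.ofReal_le_ofReal (le_inv_mul_exp_mul hθ _)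
      _ = ENNReal.ofReal (∫ ω, θ⁻¹ * Real.exp (θ * ∑ i ∈ range j, X i ω) ∂μ) :=
          (ofReal_integral_eq_lintegral_ofReal ((hexp_sum j).const_mul _)
            (ae_of_all _ fun ω => by positivity)).symm
      _ = ENNReal.ofReal (θ⁻¹ * q ^ j) := by
          rw [integral_const_mul, ← hsum, mgf]
          simp only [Finset.sum_apply]
  have hq : 0 ≤ q := mgf_nonneg
  calc ∫⁻ ω, ∑' j, ENNReal.ofReal (∑ i ∈ range j, X i ω) ∂μ
      = ∑' j, ∫⁻ ω, ENNReal.ofReal (∑ i ∈ range j, X i ω) ∂μ :=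
        lintegral_tsum fun j =>
          (Finset.measurable_sum _ fun i _ => hX i).ennreal_ofReal.aemeasurable
    _ ≤ ∑' j, ENNReal.ofReal (θ⁻¹ * q ^ j) := ENNReal.tsum_le_tsum hmoment
    _ = ENNReal.ofReal (∑' j, θ⁻¹ * q ^ j) :=
        (ENNReal.ofReal_tsum_of_nonneg (fun j => by positivity)
          ((summable_geometric_of_lt_one hq hmgf).mul_left _)).symm
    _ < ⊤ := ENNReal.ofReal_lt_top

end Measure

section Walk

variable {Ω : Type*} [MeasurableSpace Ω] {μ : Measure Ω} [IsProbabilityMeasure μ]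
  {D : ℕ → Ω → ℝ}

lemma measurable_walk (hmeas : ∀ i, Measurable (D i)) (r : ℝ) (j : ℕ) :
    Measurable fun ω => walk (D · ω) r j :=
  measurable_const.sub (Finset.measurable_sum _ fun i _ => hmeas i)

lemma integrable_walkMax (hmeas : ∀ i, Measurable (D i)) (hnonneg : ∀ i ω, 0 ≤ D i ω)
    (L : ℕ) (r : ℝ) : Integrable (fun ω => walkMax (D · ω) L r) μ := by
  have hm : Measurable fun ω => walkMax (D · ω) L r :=
    Finset.measurable_range_sup'' fun j _ => measurable_walk hmeas r j
  refine .of_bound hm.aestronglyMeasurable ((L : ℝ) * |r|) (ae_of_all _ fun ω => ?_)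
  rw [Real.norm_of_nonneg (walkMax_nonneg _ L r)]
  exact walkMax_le_of_nonneg _ (hnonneg · ω) L r

lemma continuous_integral_walkMax (hmeas : ∀ i, Measurable (D i))
    (hnonneg : ∀ i ω, 0 ≤ D i ω) (L : ℕ) : Continuous fun r => ∫ ω, walkMax (D · ω) L r ∂μ := by
  refine (LipschitzWith.of_dist_le_mul (K := L) fun r₁ r₂ => ?_).continuous
  rw [Real.dist_eq, Real.dist_eq, NNReal.coe_natCast, ← integral_sub
    (integrable_walkMax hmeas hnonneg L r₁) (integrable_walkMax hmeas hnonneg L r₂)]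
  simpa using norm_integral_le_of_norm_le_const (μ := μ) (ae_of_all _ fun ω =>
    (Real.norm_eq_abs _).trans_le (abs_walkMax_sub_walkMax_le (D · ω) L r₁ r₂))

lemma lintegral_tsum_ofReal_walk_lt_top (hmeas : ∀ i, Measurable (D i))
    (hindep : iIndepFun D μ) (hident : ∀ i, IdentDistrib (D i) (D 0) μ μ)
    (hnonneg : ∀ i ω, 0 ≤ D i ω) (hD : MemLp (D 0) 2 μ) {r : ℝ} (hr : r < ∫ ω, D 0 ω ∂μ) :
    ∫⁻ ω, ∑' j, ENNReal.ofReal (walk (D · ω) r j) ∂μ < ⊤ := by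
  obtain ⟨θ, hθ, hmgf⟩ := exists_mgf_const_sub_lt_one (ae_of_all _ (hnonneg 0)) hD hr
  have hsub : Measurable fun x : ℝ => r - x := measurable_const.sub measurable_id
  have hexp : Integrable (fun ω => Real.exp (θ * (r - D 0 ω))) μ := by
    refine .of_bound (by fun_prop) (Real.exp (θ * r)) (ae_of_all _ fun ω => ?_)
    rw [Real.norm_of_nonneg (Real.exp_pos _).le, Real.exp_le_exp]
    nlinarith [hnonneg 0 ω]
  simp_rw [walk_eq_sum]
  exact lintegral_tsum_ofReal_sum_lt_top (X := fun i ω => r - D i ω)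
    (fun i => hsub.comp (hmeas i)) (hindep.comp _ fun _ => hsub)
    (fun i => (hident i).comp hsub) hθ hexp hmgf

lemma integral_iSup_walk_sub_le (hmeas : ∀ i, Measurable (D i))
    (hindep : iIndepFun D μ) (hident : ∀ i, IdentDistrib (D i) (D 0) μ μ)
    (hnonneg : ∀ i ω, 0 ≤ D i ω) (hD : MemLp (D 0) 2 μ) (L : ℕ) {s t : ℝ} (hst : s ≤ t)
    (ht : t < ∫ ω, D 0 ω ∂μ) :
    ∫ ω, ⨆ j, walk (D · ω) s j ∂μ - ∫ ω, ⨆ j, walk (D · ω) t j ∂μ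
      ≤ ∫ ω, walkMax (D · ω) L s ∂μ - ∫ ω, walkMax (D · ω) L t ∂μ := by
  have hfin {r : ℝ} (hr : r < ∫ ω, D 0 ω ∂μ) :=
    lintegral_tsum_ofReal_walk_lt_top hmeas hindep hident hnonneg hD hr
  have hint {r : ℝ} (hr : r < ∫ ω, D 0 ω ∂μ) : Integrable (fun ω => ⨆ j, walk (D · ω) r j) μ :=
    integrable_iSup_of_lintegral_tsum_ofReal_lt_top (measurable_walk hmeas r)
      (fun ω => iSup_walk_nonneg _ r) (hfin hr)
  have hpt : ∀ᵐ ω ∂μ, (⨆ j, walk (D · ω) s j) + walkMax (D · ω) L t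
      ≤ (⨆ j, walk (D · ω) t j) + walkMax (D · ω) L s := by
    filter_upwards [ae_bddAbove_range_of_lintegral_tsum_ofReal_lt_top
      (measurable_walk hmeas t) (hfin ht)] with ω hω
    exact iSup_walk_add_walkMax_le _ L hst hω
  have hs_int := hint (hst.trans_lt ht)
  have hmax_int := integrable_walkMax (μ := μ) hmeas hnonneg L
  have := integral_mono_ae (hs_int.add (hmax_int t)) ((hint ht).add (hmax_int s)) hpt
  simp only [Pi.add_def] at this
  rw [integral_add hs_int (hmax_int t), integral_add (hint ht) (hmax_int s)] at this
  linarith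

end Walk

lemma sInf_minimizers_Ico_le_sInf_minimizers_Icc {f g : ℝ → ℝ} {b : ℝ} (hb : 0 ≤ b)
    (hf : ContinuousOn f (Set.Icc 0 b)) (hfg : ∀ s t, s ≤ t → t < b → g s - g t ≤ f s - f t) :
    sInf {r | r ∈ Set.Ico 0 b ∧ ∀ r' ∈ Set.Ico 0 b, g r ≤ g r'}
      ≤ sInf {r | r ∈ Set.Icc 0 b ∧ ∀ r' ∈ Set.Icc 0 b, f r ≤ f r'} := by
  set A := {r | r ∈ Set.Ico 0 b ∧ ∀ r' ∈ Set.Ico 0 b, g r ≤ g r'}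
  obtain ⟨s₀, hs₀, hmin⟩ := isCompact_Icc.exists_isMinOn (Set.nonempty_Icc.2 hb) hf
  refine le_csInf ⟨s₀, hs₀, fun r' hr' => hmin hr'⟩ fun s ⟨⟨hs0, hsb⟩, hsmin⟩ => ?_
  rcases A.eq_empty_or_nonempty with hA | ⟨t, ⟨ht0, htb⟩, htmin⟩
  · rw [hA, Real.sInf_empty]; exact hs0
  have hA : BddBelow A := ⟨0, fun r hr => hr.1.1⟩
  rcases le_or_gt t s with hts | hst
  · exact (csInf_le hA ⟨⟨ht0, htb⟩, htmin⟩).trans hts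
  · refine csInf_le hA ⟨⟨hs0, hst.trans htb⟩, fun r' hr' => ?_⟩
    linarith [hfg s t hst.le htb, hsmin t ⟨ht0, htb.le⟩, htmin r' hr']

/-- For every `L ≥ 1`, `r_∞ ≤ r_L`: the infimum of the minimizers of the infinite-horizon
cost `C_∞` over `[0, E[D))` is at most the infimum of the minimizers of the truncated cost
`C_L` over `[0, E[D]]`. -/
theorem stmt8
    {Ω : Type*} [MeasurableSpace Ω] (μ : Measure Ω) [IsProbabilityMeasure μ]
    (D : ℕ → Ω → ℝ)
    (hmeas : ∀ i, Measurable (D i))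
    (hindep : iIndepFun D μ)
    (hident : ∀ i, IdentDistrib (D i) (D 0) μ μ)
    (hnonneg : ∀ i ω, 0 ≤ D i ω)
    (hvar : 0 < variance (D 0) μ)
    (h p : ℝ) (hh : 0 < h)
    (L : ℕ)
    (CL Cinf : ℝ → ℝ)
    (hCL : ∀ r, CL r = h * (∫ ω, (Finset.range (L + 1)).sup' (by simp)
        (fun j => (j : ℝ) * r - ∑ i ∈ Finset.range j, D i ω) ∂μ)
      + p * (∫ ω, D 0 ω ∂μ) - p * r)
    (hCinf : ∀ r, Cinf r
      = h * (∫ ω, (⨆ j : ℕ, ((j : ℝ) * r - ∑ i ∈ Finset.range j, D i ω)) ∂μ)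
      + p * (∫ ω, D 0 ω ∂μ) - p * r)
    (rL rinf : ℝ)
    (hrL : rL = sInf {r | r ∈ Set.Icc (0 : ℝ) (∫ ω, D 0 ω ∂μ) ∧
      ∀ r' ∈ Set.Icc (0 : ℝ) (∫ ω, D 0 ω ∂μ), CL r ≤ CL r'})
    (hrinf : rinf = sInf {r | r ∈ Set.Ico (0 : ℝ) (∫ ω, D 0 ω ∂μ) ∧
      ∀ r' ∈ Set.Ico (0 : ℝ) (∫ ω, D 0 ω ∂μ), Cinf r ≤ Cinf r'}) :
    rinf ≤ rL := by
  -- `variance` vanishes outside `L²`, so a positive variance gives a finite second moment.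
  have hD : MemLp (D 0) 2 μ := memLp_two_of_variance_ne_zero (hmeas 0).aestronglyMeasurable hvar.ne'
  have hCL' : ∀ r, CL r = h * ∫ ω, walkMax (D · ω) L r ∂μ + p * (∫ ω, D 0 ω ∂μ) - p * r := hCL
  have hCinf' : ∀ r, Cinf r = h * ∫ ω, ⨆ j, walk (D · ω) r j ∂μ + p * (∫ ω, D 0 ω ∂μ) - p * r :=
    hCinf
  subst hrL hrinf
  refine sInf_minimizers_Ico_le_sInf_minimizers_Icc (integral_nonneg (hnonneg 0)) ?_
    fun s t hst ht => ?_
  · have := continuous_integral_walkMax (μ := μ) hmeas hnonneg L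
    rw [funext hCL']
    fun_prop
  · rw [hCL', hCL', hCinf', hCinf']
    have := integral_iSup_walk_sub_le hmeas hindep hident hnonneg hD L hst ht
    linarith [mul_le_mul_of_nonneg_left this hh.le]
end

section
/- For every integer L ≥ 1, E[I^{r_∞}_L] − E[I^{r_L}_L] ≤ −(r_L − r_∞) Σ_{n=1}^L P(n r_∞ ≥ Σ_{i=1}^n D_i). -/
/-!
Write `W_j = j r - (D_0 + ⋯ + D_{j-1})` and `M_L = max_{j ≤ L} W_j`. Spitzer's combinatorial
lemma: for a deterministic sequence of `N + 1` increments, the increments `M_{N+1} - M_N` of the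
walks driven by its `N + 1` cyclic rotations add up to `(W_{N+1})⁺`. An i.i.d. vector has the same
law as each of its rotations, so `(N + 1) (E M_{N+1} - E M_N) = E (W_{N+1})⁺`, which sums to
Spitzer's identity `E M_L = ∑_{n=1}^{L} E (W_n)⁺ / n`. Comparing two drifts `r, r'` term by term,
convexity of `t ↦ t⁺` gives `(W_n(r'))⁺ - (W_n(r))⁺ ≥ n (r' - r) 𝟙{W_n(r) ≥ 0}`.
-/

open MeasureTheory ProbabilityTheory Finset

namespace Spitzer

section RunningMax

variable {α : Type*} [LinearOrder α]

def runningMax (s : ℕ → α) (m : ℕ) : α :=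
  (range (m + 1)).sup' nonempty_range_add_one s

theorem le_runningMax (s : ℕ → α) {j m : ℕ} (hj : j ≤ m) : s j ≤ runningMax s m :=
  le_sup' s (mem_range_succ_iff.mpr hj)

theorem runningMax_congr {s t : ℕ → α} {m : ℕ} (h : ∀ j ≤ m, s j = t j) :
    runningMax s m = runningMax t m :=
  sup'_congr _ rfl fun j hj => h j (mem_range_succ_iff.mp hj)

theorem runningMax_zero (s : ℕ → α) : runningMax s 0 = s 0 := by
  simp [runningMax]

theorem runningMax_succ (s : ℕ → α) (m : ℕ) :
    runningMax s (m + 1) = max (runningMax s m) (s (m + 1)) := by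
  rw [runningMax, sup'_congr _ range_add_one (fun _ _ => rfl), sup'_insert]
  exact max_comm _ _

theorem runningMax_succ' (s : ℕ → α) (m : ℕ) :
    runningMax s (m + 1) = max (s 0) (runningMax (fun j => s (j + 1)) m) := by
  rw [runningMax, sup'_congr _ (range_add_one' _) (fun _ _ => rfl), sup'_insert (by simp),
    sup'_map]
  rfl

end RunningMax

section CyclicLemma

variable {α : Type*} [AddCommGroup α] [LinearOrder α] [IsOrderedAddMonoid α]

theorem runningMax_add_const (s : ℕ → α) (c : α) (m : ℕ) :
    runningMax (fun j => s j + c) m = runningMax s m + c :=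
  (sup'_add _ _ _ _).symm

theorem runningMax_sub_const (s : ℕ → α) (c : α) (m : ℕ) :
    runningMax (fun j => s j - c) m = runningMax s m - c := by
  simp_rw [sub_eq_add_neg]
  exact runningMax_add_const s (-c) m

/-- Spitzer's combinatorial lemma, for a walk `s` with `(n + 1)`-periodic increments. -/
theorem sum_runningMax_succ_sub_runningMax {s : ℕ → α} (n : ℕ)
    (hs : ∀ k, s (k + (n + 1)) = s k + s (n + 1)) :
    ∑ k ∈ range (n + 1),
      (runningMax (fun j => s (k + j)) (n + 1) - runningMax (fun j => s (k + j)) n)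
      = max (s (n + 1)) 0 := by
  let V (k : ℕ) : α := runningMax (fun j => s (k + j)) n
  change ∑ k ∈ range (n + 1), (runningMax (fun j => s (k + j)) (n + 1) - V k) = _
  rcases le_or_gt (s (n + 1)) 0 with hneg | hpos
  · have hterm (k : ℕ) : runningMax (fun j => s (k + j)) (n + 1) = V k := by
      rw [runningMax_succ]
      refine max_eq_left ?_
      calc s (k + (n + 1)) = s k + s (n + 1) := hs k
        _ ≤ s k := add_le_of_nonpos_right hneg
        _ ≤ V k := le_runningMax (fun j => s (k + j)) (Nat.zero_le n)
    simp [hterm, max_eq_right hneg]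
  · -- `s k < s (k + (n + 1))`: the window from `k` never needs its first point, so the sum
    -- telescopes
    have hterm (k : ℕ) : runningMax (fun j => s (k + j)) (n + 1) = V (k + 1) := by
      have hk : s k ≤ V (k + 1) := calc
        s k ≤ s (k + (n + 1)) := by rw [hs k]; exact le_add_of_nonneg_right hpos.le
        _ = s (k + 1 + n) := by rw [Nat.add_comm n 1, Nat.add_assoc]
        _ ≤ V (k + 1) := le_runningMax (fun j => s (k + 1 + j)) le_rfl
      have hshift : (fun j => s (k + (j + 1))) = fun j => s (k + 1 + j) := by
        funext j
        rw [Nat.add_comm j 1, Nat.add_assoc]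
      rw [runningMax_succ', Nat.add_zero, hshift]
      exact max_eq_right hk
    have hlast : V (n + 1) = V 0 + s (n + 1) := by
      simp only [V, Nat.zero_add, Nat.add_comm (n + 1), hs, runningMax_add_const]
    rw [sum_congr rfl fun k _ => congrArg (· - V k) (hterm k), sum_range_sub V, hlast,
      max_eq_left hpos.le, add_sub_cancel_left]

end CyclicLemma

section Walk

def walk (x : ℕ → ℝ) (r : ℝ) (j : ℕ) : ℝ :=
  j * r - ∑ i ∈ range j, x i

theorem walk_congr {x y : ℕ → ℝ} (r : ℝ) {j : ℕ} (h : ∀ i < j, x i = y i) :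
    walk x r j = walk y r j :=
  congrArg (_ - ·) (sum_congr rfl fun i hi => h i (mem_range.mp hi))

-- With this cast `(i : Fin n)` is `i % n`: `walk (fun i => x i) r` is driven by the periodic
-- extension of `x`.
open scoped Fin.NatCast

variable {n : ℕ} [NeZero n] (r : ℝ)

theorem walk_rotate (x : Fin n → ℝ) (k : ℕ) :
    walk (fun i => x (i + (k : Fin n))) r
      = fun j => walk (fun i => x i) r (k + j) - walk (fun i => x i) r k := by
  ext j
  simp only [walk, sum_range_add, Nat.cast_add, add_comm (k : Fin n)]
  ring

theorem walk_period (x : Fin n → ℝ) : walk (fun i => x i) r n = n * r - ∑ c, x c := by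
  rw [walk, ← Fin.sum_univ_eq_sum_range (fun i => x i)]
  simp

theorem walk_add_period (x : Fin n → ℝ) (k : ℕ) :
    walk (fun i => x i) r (k + n) = walk (fun i => x i) r k + walk (fun i => x i) r n := by
  have h := congrFun (walk_rotate r x k) n
  have hsum : ∑ c, x (c + k) = ∑ c, x c := Equiv.sum_comp (Equiv.addRight (k : Fin n)) x
  rw [walk_period r fun c => x (c + (k : Fin n)), hsum, ← walk_period] at h
  linarith

theorem walk_natCast (x : ℕ → ℝ) {j : ℕ} (hj : j ≤ n) :
    walk (fun i => x (i : Fin n)) r j = walk x r j :=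
  walk_congr r fun i hi => by rw [Fin.val_cast_of_lt (hi.trans_le hj)]

theorem runningMax_walk_natCast (x : ℕ → ℝ) {m : ℕ} (hm : m ≤ n) :
    runningMax (walk (fun i => x (i : Fin n)) r) m = runningMax (walk x r) m :=
  runningMax_congr fun _ hj => walk_natCast r x (hj.trans hm)

theorem sum_runningMax_walk_rotate (N : ℕ) (x : Fin (N + 1) → ℝ) :
    ∑ k ∈ range (N + 1),
      (runningMax (walk (fun i => x (i + (k : Fin (N + 1)))) r) (N + 1)
        - runningMax (walk (fun i => x (i + (k : Fin (N + 1)))) r) N)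
      = max (walk (fun i => x i) r (N + 1)) 0 := by
  simp only [walk_rotate, runningMax_sub_const, sub_sub_sub_cancel_right]
  exact sum_runningMax_succ_sub_runningMax N (walk_add_period r x)

end Walk

section Measurability

variable {X : Type*} [MeasurableSpace X] {f : ℕ → X → ℝ}

theorem measurable_runningMax (hf : ∀ j, Measurable (f j)) (m : ℕ) :
    Measurable fun x => runningMax (fun j => f j x) m := by
  induction m with
  | zero => simpa only [runningMax_zero] using hf 0
  | succ m ih => simpa only [runningMax_succ] using ih.max (hf (m + 1))

theorem integrable_runningMax {μ : Measure X} (hf : ∀ j, Integrable (f j) μ) (m : ℕ) :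
    Integrable (fun x => runningMax (fun j => f j x) m) μ := by
  induction m with
  | zero => simpa only [runningMax_zero] using hf 0
  | succ m ih =>
    simp only [runningMax_succ]
    exact ih.sup (hf (m + 1))

end Measurability

variable {Ω : Type*} [MeasurableSpace Ω] {μ : Measure Ω}

section IID

variable [IsProbabilityMeasure μ] {β : Type*} [MeasurableSpace β] {X : ℕ → Ω → β}

theorem map_pi_eq_pi_of_iid (hindep : iIndepFun X μ)
    (hident : ∀ i, IdentDistrib (X i) (X 0) μ μ) {ι : Type*} [Fintype ι] {g : ι → ℕ}
    (hg : Function.Injective g) :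
    μ.map (fun ω i => X (g i) ω) = Measure.pi fun _ => μ.map (X 0) := by
  rw [(iIndepFun_iff_map_fun_eq_pi_map fun i => (hident (g i)).aemeasurable_fst).mp
    (hindep.precomp hg)]
  simp only [(hident _).map_eq]

open scoped Fin.NatCast in
theorem identDistrib_rotate (hindep : iIndepFun X μ)
    (hident : ∀ i, IdentDistrib (X i) (X 0) μ μ) (N k : ℕ) :
    IdentDistrib (fun ω (i : Fin (N + 1)) => X ↑(i + (k : Fin (N + 1))) ω)
      (fun ω (i : Fin (N + 1)) => X i ω) μ μ where
  aemeasurable_fst := aemeasurable_pi_lambda _ fun _ => (hident _).aemeasurable_fst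
  aemeasurable_snd := aemeasurable_pi_lambda _ fun _ => (hident _).aemeasurable_fst
  map_eq :=
    (map_pi_eq_pi_of_iid hindep hident (Fin.val_injective.comp (add_left_injective _))).trans
      (map_pi_eq_pi_of_iid hindep hident Fin.val_injective).symm

end IID

variable {D : ℕ → Ω → ℝ}

section FiniteMeasure

variable [IsFiniteMeasure μ]

theorem integrable_walk (hD : ∀ i, Integrable (D i) μ) (r : ℝ) (j : ℕ) :
    Integrable (fun ω => walk (D · ω) r j) μ :=
  (integrable_const _).sub (integrable_finsetSum _ fun i _ => hD i)

theorem mul_measureReal_le_integral_max_walk_sub (hD : ∀ i, Integrable (D i) μ) (r r' : ℝ)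
    (n : ℕ) :
    n * (r' - r) * μ.real {ω | ∑ i ∈ range n, D i ω ≤ n * r}
      ≤ ∫ ω, max (walk (D · ω) r' n) 0 ∂μ - ∫ ω, max (walk (D · ω) r n) 0 ∂μ := by
  set A := {ω | ∑ i ∈ range n, D i ω ≤ n * r}
  have hA : NullMeasurableSet A μ :=
    nullMeasurableSet_le (integrable_finsetSum _ fun i _ => hD i).aemeasurable aemeasurable_const
  have hpt (ω : Ω) : A.indicator (fun _ => n * (r' - r)) ω
      ≤ max (walk (D · ω) r' n) 0 - max (walk (D · ω) r n) 0 := by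
    have hdiff : walk (D · ω) r' n - walk (D · ω) r n = n * (r' - r) := by
      simp only [walk]
      ring
    by_cases hω : ω ∈ A
    · have hpos : 0 ≤ walk (D · ω) r n := sub_nonneg.mpr hω
      rw [Set.indicator_of_mem hω, max_eq_left hpos, ← hdiff]
      exact sub_le_sub_right (le_max_left _ _) _
    · have hneg : walk (D · ω) r n ≤ 0 := sub_nonpos.mpr (le_of_not_ge hω)
      rw [Set.indicator_of_notMem hω, max_eq_right hneg, sub_zero]
      exact le_max_right _ _
  calc n * (r' - r) * μ.real A = ∫ ω, A.indicator (fun _ => n * (r' - r)) ω ∂μ := by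
        rw [integral_indicator₀ hA, setIntegral_const, smul_eq_mul, mul_comm]
    _ ≤ ∫ ω, (max (walk (D · ω) r' n) 0 - max (walk (D · ω) r n) 0) ∂μ :=
        integral_mono ((integrable_const _).indicator₀ hA)
          ((integrable_walk hD r' n).pos_part.sub (integrable_walk hD r n).pos_part) hpt
    _ = _ := integral_sub (integrable_walk hD r' n).pos_part (integrable_walk hD r n).pos_part

end FiniteMeasure

variable [IsProbabilityMeasure μ]

open scoped Fin.NatCast in
theorem mul_integral_runningMax_succ_sub (hindep : iIndepFun D μ)
    (hident : ∀ i, IdentDistrib (D i) (D 0) μ μ) (hD : ∀ i, Integrable (D i) μ) (r : ℝ)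
    (N : ℕ) :
    (N + 1) * (∫ ω, runningMax (walk (D · ω) r) (N + 1) ∂μ
        - ∫ ω, runningMax (walk (D · ω) r) N ∂μ)
      = ∫ ω, max (walk (D · ω) r (N + 1)) 0 ∂μ := by
  let G (x : Fin (N + 1) → ℝ) : ℝ :=
    runningMax (walk (fun i => x i) r) (N + 1) - runningMax (walk (fun i => x i) r) N
  have hG : Measurable G := by
    have hwalk (j : ℕ) : Measurable fun x : Fin (N + 1) → ℝ => walk (fun i => x i) r j :=
      measurable_const.sub (Finset.measurable_sum _ fun i _ => measurable_pi_apply _)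
    exact (measurable_runningMax hwalk _).sub (measurable_runningMax hwalk _)
  have hGD (ω : Ω) : G (fun i => D i ω)
      = runningMax (walk (D · ω) r) (N + 1) - runningMax (walk (D · ω) r) N := by
    simp only [G, runningMax_walk_natCast r (D · ω) le_rfl,
      runningMax_walk_natCast r (D · ω) N.le_succ]
  have hMint (m : ℕ) := integrable_runningMax (integrable_walk hD r) m
  have hGint : Integrable (fun ω => G fun i => D i ω) μ := by
    simp only [hGD]
    exact (hMint _).sub (hMint _)
  have hrot (k : ℕ) := (identDistrib_rotate hindep hident N k).comp hG
  have hrot_eq (k : ℕ) : ∫ ω, G (fun i => D ↑(i + (k : Fin (N + 1))) ω) ∂μ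
      = ∫ ω, G (fun i => D i ω) ∂μ := (hrot k).integral_eq
  calc (N + 1) * (∫ ω, runningMax (walk (D · ω) r) (N + 1) ∂μ
        - ∫ ω, runningMax (walk (D · ω) r) N ∂μ)
      = ∑ k ∈ range (N + 1), ∫ ω, G (fun i => D ↑(i + (k : Fin (N + 1))) ω) ∂μ := by
        rw [sum_congr rfl fun k _ => hrot_eq k, sum_const, card_range, nsmul_eq_mul,
          ← integral_sub (hMint _) (hMint _)]
        simp only [hGD]
        push_cast
        rfl
    _ = ∫ ω, ∑ k ∈ range (N + 1), G (fun i => D ↑(i + (k : Fin (N + 1))) ω) ∂μ :=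
        (integral_finsetSum _ fun k _ => (hrot k).integrable_iff.mpr hGint).symm
    _ = ∫ ω, max (walk (D · ω) r (N + 1)) 0 ∂μ := by
        refine integral_congr_ae (ae_of_all _ fun ω => ?_)
        dsimp only
        rw [← walk_natCast r (D · ω) le_rfl]
        exact sum_runningMax_walk_rotate r N fun i => D i ω

theorem integral_runningMax_eq_sum (hindep : iIndepFun D μ)
    (hident : ∀ i, IdentDistrib (D i) (D 0) μ μ) (hD : ∀ i, Integrable (D i) μ) (r : ℝ)
    (L : ℕ) :
    ∫ ω, runningMax (walk (D · ω) r) L ∂μ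
      = ∑ n ∈ Icc 1 L, (∫ ω, max (walk (D · ω) r n) 0 ∂μ) / n := by
  induction L with
  | zero => simp [runningMax_zero, walk]
  | succ L ih =>
    rw [sum_Icc_succ_top (Nat.le_add_left 1 L), ← ih,
      ← mul_integral_runningMax_succ_sub hindep hident hD r L]
    push_cast
    field_simp
    ring

theorem integral_runningMax_sub_le (hindep : iIndepFun D μ)
    (hident : ∀ i, IdentDistrib (D i) (D 0) μ μ) (hD : ∀ i, Integrable (D i) μ) (r r' : ℝ)
    (L : ℕ) :
    ∫ ω, runningMax (walk (D · ω) r) L ∂μ - ∫ ω, runningMax (walk (D · ω) r') L ∂μ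
      ≤ -(r' - r) * ∑ n ∈ Icc 1 L, μ.real {ω | ∑ i ∈ range n, D i ω ≤ n * r} := by
  rw [integral_runningMax_eq_sum hindep hident hD, integral_runningMax_eq_sum hindep hident hD,
    ← sum_sub_distrib, mul_sum]
  refine sum_le_sum fun n hn => ?_
  have hn : (0 : ℝ) < n := by exact_mod_cast (mem_Icc.mp hn).1
  rw [← sub_div, div_le_iff₀ hn]
  linarith [mul_measureReal_le_integral_max_walk_sub hD r r' n]

end Spitzer

/-- For every `L ≥ 1`,
`E[I^{r_∞}_L] − E[I^{r_L}_L] ≤ −(r_L − r_∞) Σ_{n=1}^L P(n r_∞ ≥ Σ_{i=1}^n D_i)`. -/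
theorem stmt13
    {Ω : Type*} [MeasurableSpace Ω] (μ : Measure Ω) [IsProbabilityMeasure μ]
    (D : ℕ → Ω → ℝ)
    (hindep : iIndepFun D μ)
    (hident : ∀ i, IdentDistrib (D i) (D 0) μ μ)
    (hint : Integrable (D 0) μ)
    (L : ℕ)
    (rL rinf : ℝ) :
    (∫ ω, (Finset.range (L + 1)).sup' (by simp)
        (fun j => (j : ℝ) * rinf - ∑ i ∈ Finset.range j, D i ω) ∂μ)
      - (∫ ω, (Finset.range (L + 1)).sup' (by simp)
          (fun j => (j : ℝ) * rL - ∑ i ∈ Finset.range j, D i ω) ∂μ)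
      ≤ -(rL - rinf) * ∑ n ∈ Finset.Icc 1 L,
          (μ {ω | (n : ℝ) * rinf ≥ ∑ i ∈ Finset.range n, D i ω}).toReal :=
  Spitzer.integral_runningMax_sub_le hindep hident
    (fun i => (hident i).integrable_iff.mpr hint) rinf rL L
end

section
/- Suppose D is exponentially distributed with rate λ > 0, let h, p > 0, set τ := √(h/(2p + h)) and r_∞ := λ^{−1}(1 − τ). Then the function φ(θ) := exp(θ r_∞) E[exp(−θ D)] = exp(λ^{−1}(1 − τ) θ) · λ/(λ + θ) on [0, ∞) attains its infimum at the unique point ϑ = τ λ / (1 − τ), and γ := inf_{θ ≥ 0} φ(θ) = (1 − τ) exp(τ), which lies in (0, 1). -/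
/-!
Exponential tilting gives `E[exp(-θ D)] = λ/(λ + θ)`. Substituting `y = (1 - τ)(λ + θ)/λ`
turns `φ(θ)` into `(1 - τ) e^τ · e^(y - 1)/y`, and `e^(y - 1) ≥ y` with equality only at
`y = 1`, i.e. at `θ = ϑ`. Finally `(1 - τ) e^τ < 1` is `1 - τ < e^(-τ)`.
-/

open MeasureTheory ProbabilityTheory

lemma exponentialPDF_mul_exp_neg_mul {lam θ : ℝ} (hθ : 0 < lam + θ) (x : ℝ) :
    exponentialPDF lam x * ENNReal.ofReal (Real.exp (-θ * x)) =
      ENNReal.ofReal (lam / (lam + θ)) * exponentialPDF (lam + θ) x := by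
  rcases le_or_gt 0 x with hx | hx
  · rw [exponentialPDF_of_nonneg hx, exponentialPDF_of_nonneg hx,
      ← ENNReal.ofReal_mul' (Real.exp_pos _).le,
      ← ENNReal.ofReal_mul' (mul_pos hθ (Real.exp_pos _)).le]
    congr 1
    rw [← mul_assoc, div_mul_cancel₀ _ hθ.ne', mul_assoc, ← Real.exp_add]
    ring_nf
  · rw [exponentialPDF_of_neg hx, exponentialPDF_of_neg hx, zero_mul, mul_zero]

lemma integral_exp_neg_mul_expMeasure {lam θ : ℝ} (hlam : 0 ≤ lam) (hθ : 0 < lam + θ) :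
    ∫ x, Real.exp (-θ * x) ∂expMeasure lam = lam / (lam + θ) := by
  have hmeas : Measurable fun x : ℝ ↦ Real.exp (-θ * x) := by fun_prop
  have hpdf (r : ℝ) : Measurable (exponentialPDF r) :=
    (measurable_exponentialPDFReal r).ennreal_ofReal
  have hexpMeasure : expMeasure lam = volume.withDensity (exponentialPDF lam) := rfl
  rw [integral_eq_lintegral_of_nonneg_ae (ae_of_all _ fun x ↦ (Real.exp_pos _).le)
      hmeas.aestronglyMeasurable, hexpMeasure,
    lintegral_withDensity_eq_lintegral_mul _ (hpdf lam) hmeas.ennreal_ofReal]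
  simp only [Pi.mul_apply, exponentialPDF_mul_exp_neg_mul hθ]
  rw [lintegral_const_mul _ (hpdf _), lintegral_exponentialPDF_eq_one hθ, mul_one,
    ENNReal.toReal_ofReal (div_nonneg hlam hθ.le)]

lemma integral_exp_neg_mul_of_map_eq_expMeasure {Ω : Type*} [MeasurableSpace Ω]
    {μ : Measure Ω} {D : Ω → ℝ} (hD : AEMeasurable D μ) {lam θ : ℝ}
    (hmap : μ.map D = expMeasure lam) (hlam : 0 ≤ lam) (hθ : 0 < lam + θ) :
    ∫ ω, Real.exp (-θ * D ω) ∂μ = lam / (lam + θ) := by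
  rw [← integral_exp_neg_mul_expMeasure hlam hθ, ← hmap,
    integral_map hD (by fun_prop : Measurable fun x : ℝ ↦ Real.exp (-θ * x)).aestronglyMeasurable]

section Minimization

variable {lam τ θ : ℝ}

lemma exp_mul_mul_div_add_eq (hlam : lam ≠ 0) (hθ : lam + θ ≠ 0) (hτ : τ ≠ 1) :
    Real.exp ((1 - τ) / lam * θ) * (lam / (lam + θ)) =
      (1 - τ) * Real.exp τ *
        (Real.exp ((1 - τ) * (lam + θ) / lam - 1) / ((1 - τ) * (lam + θ) / lam)) := by
  have h1τ : 1 - τ ≠ 0 := sub_ne_zero.2 hτ.symm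
  rw [show (1 - τ) / lam * θ = ((1 - τ) * (lam + θ) / lam - 1) + τ by field_simp; ring,
    Real.exp_add]
  field_simp

lemma mul_exp_lt_exp_mul_mul_div_add (hlam : 0 < lam) (hτ : τ < 1) (hθ : 0 < lam + θ)
    (hne : θ ≠ τ * lam / (1 - τ)) :
    (1 - τ) * Real.exp τ < Real.exp ((1 - τ) / lam * θ) * (lam / (lam + θ)) := by
  set y := (1 - τ) * (lam + θ) / lam with hy
  have h1τ : 0 < 1 - τ := sub_pos.2 hτ
  have hy0 : 0 < y := by positivity
  have hy1 : y - 1 ≠ 0 := by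
    contrapose! hne
    rw [sub_eq_zero, hy, div_eq_one_iff_eq hlam.ne'] at hne
    rw [eq_div_iff h1τ.ne']
    linarith
  have hexp : 1 < Real.exp (y - 1) / y := by
    rw [one_lt_div hy0]
    linarith [Real.add_one_lt_exp hy1]
  rw [exp_mul_mul_div_add_eq hlam.ne' hθ.ne' hτ.ne]
  exact lt_mul_of_one_lt_right (by positivity) hexp

lemma exp_mul_mul_div_add_of_eq (hlam : lam ≠ 0) (hτ : τ ≠ 1) :
    Real.exp ((1 - τ) / lam * (τ * lam / (1 - τ))) * (lam / (lam + τ * lam / (1 - τ))) =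
      (1 - τ) * Real.exp τ := by
  have h1τ : 1 - τ ≠ 0 := sub_ne_zero.2 hτ.symm
  have hexp : (1 - τ) / lam * (τ * lam / (1 - τ)) = τ := by field_simp
  have hdiv : lam / (lam + τ * lam / (1 - τ)) = 1 - τ := by field_simp; ring_nf
  rw [hexp, hdiv, mul_comm]

lemma one_sub_mul_exp_lt_one (hτ : τ ≠ 0) : (1 - τ) * Real.exp τ < 1 := by
  calc (1 - τ) * Real.exp τ < Real.exp (-τ) * Real.exp τ := by
        gcongr
        linarith [Real.add_one_lt_exp (neg_ne_zero.2 hτ)]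
    _ = 1 := by rw [← Real.exp_add, neg_add_cancel, Real.exp_zero]

end Minimization

theorem stmt17_general
    {Ω : Type*} [MeasurableSpace Ω] (μ : Measure Ω)
    (lam : ℝ) (hlam : 0 < lam)
    (D : Ω → ℝ) (hmeas : Measurable D) (hexp : μ.map D = expMeasure lam)
    (h p : ℝ) (hh : 0 < h) (hp : 0 < p)
    (τ : ℝ) (hτ : τ = Real.sqrt (h / (2 * p + h)))
    (rinf : ℝ) (hrinf : rinf = (1 - τ) / lam)
    (φ : ℝ → ℝ) (hφ : ∀ θ, φ θ = Real.exp (θ * rinf) * ∫ ω, Real.exp (-θ * D ω) ∂μ)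
    (ϑ : ℝ) (hϑ : ϑ = τ * lam / (1 - τ)) :
    (∀ θ : ℝ, 0 ≤ θ →
      φ θ = Real.exp ((1 - τ) / lam * θ) * (lam / (lam + θ))) ∧
    (∀ θ : ℝ, 0 ≤ θ → φ ϑ ≤ φ θ) ∧
    (∀ θ : ℝ, 0 ≤ θ → (∀ θ' : ℝ, 0 ≤ θ' → φ θ ≤ φ θ') → θ = ϑ) ∧
    sInf (φ '' Set.Ici (0 : ℝ)) = (1 - τ) * Real.exp τ ∧
    0 < (1 - τ) * Real.exp τ ∧ (1 - τ) * Real.exp τ < 1 := by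
  have hτ0 : 0 < τ := hτ ▸ Real.sqrt_pos.2 (by positivity)
  have hτ1 : τ < 1 := hτ ▸ (Real.sqrt_lt' one_pos).2
    (by rw [one_pow, div_lt_one (by positivity)]; linarith)
  have hϑ0 : 0 ≤ ϑ := hϑ ▸ div_nonneg (by positivity) (by linarith)
  have hform (θ : ℝ) (hθ : 0 ≤ θ) :
      φ θ = Real.exp ((1 - τ) / lam * θ) * (lam / (lam + θ)) := by
    rw [hφ, integral_exp_neg_mul_of_map_eq_expMeasure hmeas.aemeasurable hexp hlam.le
      (by linarith), hrinf, mul_comm θ]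
  have hval : φ ϑ = (1 - τ) * Real.exp τ := by
    rw [hform ϑ hϑ0, hϑ, exp_mul_mul_div_add_of_eq hlam.ne' hτ1.ne]
  have hlt (θ : ℝ) (hθ : 0 ≤ θ) (hne : θ ≠ ϑ) : φ ϑ < φ θ := by
    rw [hval, hform θ hθ]
    exact mul_exp_lt_exp_mul_mul_div_add hlam hτ1 (by linarith) (hϑ ▸ hne)
  have hmin (θ : ℝ) (hθ : 0 ≤ θ) : φ ϑ ≤ φ θ := by
    rcases eq_or_ne θ ϑ with rfl | hne
    exacts [le_rfl, (hlt θ hθ hne).le]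
  refine ⟨hform, hmin, fun θ hθ hθmin ↦ ?_, ?_, by positivity, one_sub_mul_exp_lt_one hτ0.ne'⟩
  · by_contra hne
    exact (hθmin ϑ hϑ0).not_gt (hlt θ hθ hne)
  · rw [← hval]
    exact IsLeast.csInf_eq ⟨⟨ϑ, hϑ0, rfl⟩, by rintro _ ⟨θ, hθ, rfl⟩; exact hmin θ hθ⟩

/-- **The exponential rate under exponential demand.** With `D` exponential of rate `λ > 0`,
`τ = √(h/(2p+h))` and `r_∞ = (1 − τ)/λ`, the function
`φ(θ) = exp(θ r_∞) E[exp(−θ D)] = exp((1 − τ)θ/λ) · λ/(λ + θ)` on `[0, ∞)` attains its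
infimum at the unique point `ϑ = τ λ/(1 − τ)`, and
`γ = inf_{θ ≥ 0} φ(θ) = (1 − τ) exp(τ) ∈ (0, 1)`. -/
theorem stmt17
    {Ω : Type*} [MeasurableSpace Ω] (μ : Measure Ω) [IsProbabilityMeasure μ]
    (lam : ℝ) (hlam : 0 < lam)
    (D : Ω → ℝ) (hmeas : Measurable D) (hexp : μ.map D = expMeasure lam)
    (h p : ℝ) (hh : 0 < h) (hp : 0 < p)
    (τ : ℝ) (hτ : τ = Real.sqrt (h / (2 * p + h)))
    (rinf : ℝ) (hrinf : rinf = (1 - τ) / lam)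
    (φ : ℝ → ℝ) (hφ : ∀ θ, φ θ = Real.exp (θ * rinf) * ∫ ω, Real.exp (-θ * D ω) ∂μ)
    (ϑ : ℝ) (hϑ : ϑ = τ * lam / (1 - τ)) :
    (∀ θ : ℝ, 0 ≤ θ →
      φ θ = Real.exp ((1 - τ) / lam * θ) * (lam / (lam + θ))) ∧
    (∀ θ : ℝ, 0 ≤ θ → φ ϑ ≤ φ θ) ∧
    (∀ θ : ℝ, 0 ≤ θ → (∀ θ' : ℝ, 0 ≤ θ' → φ θ ≤ φ θ') → θ = ϑ) ∧
    sInf (φ '' Set.Ici (0 : ℝ)) = (1 - τ) * Real.exp τ ∧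
    0 < (1 - τ) * Real.exp τ ∧ (1 - τ) * Real.exp τ < 1 :=
  stmt17_general μ lam hlam D hmeas hexp h p hh hp τ hτ rinf hrinf φ hφ ϑ hϑ
end
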